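/- arXiv:1104.4997 — 6 statements merged into one kernel-verified Lean document; each statement's English description precedes it below -/
import Mathlib

section
/- There exists an absolute constant c > 0 such that the following holds. Let A be an n×n random matrix whose entries Y_{ij} (for all 1 ≤ i,j ≤ n) are independent real random variables, each moment bounded with parameter L = 1 and satisfying E[Y_{ij}] = 0. Let P(A) = Σ_{σ ∈ S_n} Π_{i=1}^n A_{i,σ(i)} denote the permanent of A. Then for every t > 0, Pr[ |P(A)| ≥ t·√(n!) ] ≤ max{ e^{−n}, e² · e^{−c·t^{2/n}} }. -/
/-!
Chebyshev's inequality suffices. Expanding `E[per(A)²]` over pairs of permutations `(σ, τ)`,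
independence and centring kill every term with `σ ≠ τ`, in which some entry `Y i (σ i)` occurs
exactly once; hence `E[per(A)²] = ∑_σ ∏_i E[Y i (σ i)²] ≤ n! 2ⁿ`, since moment boundedness with
`L = 1` gives `E|Y| ≤ 1` and `E[Y²] ≤ 2`. So `P(|per(A)| ≥ t √n!) ≤ 2ⁿ / t²`, which is at most
`e⁻ⁿ` once `t^(2/n) > 2e`; below that threshold the second term of the maximum is at least `1`
for `c = 1/e`.
-/

open MeasureTheory ProbabilityTheory Finset

/-- A real random variable `Z` is *moment bounded* with parameter `L > 0` if all its absolute
moments exist and for every integer `i ≥ 1`, `E[|Z|^i] ≤ i·L·E[|Z|^{i-1}]`. -/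
def MomentBounded {Ω : Type*} [MeasurableSpace Ω] (P : Measure Ω) (Z : Ω → ℝ) (L : ℝ) : Prop :=
  (∀ i : ℕ, Integrable (fun ω => |Z ω| ^ i) P) ∧
  ∀ i : ℕ, 1 ≤ i → (∫ ω, |Z ω| ^ i ∂P) ≤ i * L * ∫ ω, |Z ω| ^ (i - 1) ∂P

section MomentBounded

variable {Ω : Type*} [MeasurableSpace Ω] {P : Measure Ω} {Z : Ω → ℝ} {L : ℝ}

lemma MomentBounded.integrable_pow (h : MomentBounded P Z L) (hZ : AEStronglyMeasurable Z P)
    (k : ℕ) : Integrable (fun ω => Z ω ^ k) P :=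
  (h.1 k).mono' (hZ.pow k) (ae_of_all _ fun ω => by simp)

lemma MomentBounded.integral_sq_le [IsProbabilityMeasure P] (h : MomentBounded P Z L) :
    ∫ ω, Z ω ^ 2 ∂P ≤ 2 * L ^ 2 := by
  have h1 : ∫ ω, |Z ω| ∂P ≤ L := by simpa using h.2 1 le_rfl
  have h2 : ∫ ω, |Z ω| ^ 2 ∂P ≤ 2 * L * ∫ ω, |Z ω| ∂P := by simpa using h.2 2 one_le_two
  have hL : 0 ≤ L := (integral_nonneg fun ω => abs_nonneg (Z ω)).trans h1
  simp only [sq_abs] at h2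
  nlinarith

end MomentBounded

namespace ProbabilityTheory

variable {Ω κ : Type*} [MeasurableSpace Ω] {P : Measure Ω} [Fintype κ] {Z : κ → Ω → ℝ}

lemma iIndepFun.integrable_fun_prod (hZ : iIndepFun Z P) (hmeas : ∀ p, Measurable (Z p))
    (hint : ∀ p, Integrable (Z p) P) : Integrable (fun ω => ∏ p, Z p ω) P := by
  refine ⟨Finset.aestronglyMeasurable_fun_prod _ fun p _ => (hmeas p).aestronglyMeasurable, ?_⟩
  have hnorm : iIndepFun (fun p ω => ‖Z p ω‖ₑ) P := hZ.comp _ fun _ => measurable_enorm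
  have enorm_prod (ω : Ω) : ‖∏ p, Z p ω‖ₑ = ∏ p, ‖Z p ω‖ₑ := by
    simp [enorm_eq_nnnorm, nnnorm_prod]
  simp only [HasFiniteIntegral, enorm_prod]
  rw [lintegral_prod_eq_prod_lintegral_of_indepFun univ _ hnorm fun p => (hmeas p).enorm]
  exact ENNReal.prod_lt_top fun p _ => (hint p).2

end ProbabilityTheory

section Permanent

variable {ι : Type*} [Fintype ι] [DecidableEq ι]

lemma prod_apply_perm_eq_prod_pow {M : Type*} [CommMonoid M] (y : ι → ι → M)
    (σ : Equiv.Perm ι) :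
    ∏ i, y i (σ i) = ∏ p : ι × ι, y p.1 p.2 ^ (if σ p.1 = p.2 then 1 else 0) := by
  rw [Fintype.prod_prod_type]
  simp [pow_ite]

lemma prod_apply_perm_mul_prod_apply_perm {M : Type*} [CommMonoid M] (y : ι → ι → M)
    (σ τ : Equiv.Perm ι) :
    (∏ i, y i (σ i)) * ∏ i, y i (τ i) =
      ∏ p : ι × ι,
        y p.1 p.2 ^ ((if σ p.1 = p.2 then 1 else 0) + if τ p.1 = p.2 then 1 else 0) := by
  simp only [prod_apply_perm_eq_prod_pow y, ← prod_mul_distrib, pow_add]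

variable {Ω : Type*} [MeasurableSpace Ω] {P : Measure Ω} {Y : ι → ι → Ω → ℝ}

lemma integrable_prod_apply_perm_mul_prod_apply_perm (hmeas : ∀ i j, Measurable (Y i j))
    (hind : iIndepFun (fun p : ι × ι => Y p.1 p.2) P)
    (hint : ∀ i j k, Integrable (fun ω => Y i j ω ^ k) P) (σ τ : Equiv.Perm ι) :
    Integrable (fun ω => (∏ i, Y i (σ i) ω) * ∏ i, Y i (τ i) ω) P := by
  simp only [fun ω => prod_apply_perm_mul_prod_apply_perm (fun i j => Y i j ω) σ τ]
  exact (hind.comp _ fun p => measurable_id.pow_const _).integrable_fun_prod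
    (fun p => (hmeas p.1 p.2).pow_const _) fun p => hint p.1 p.2 _

lemma integral_prod_apply_perm_mul_prod_apply_perm [IsProbabilityMeasure P]
    (hmeas : ∀ i j, Measurable (Y i j)) (hind : iIndepFun (fun p : ι × ι => Y p.1 p.2) P)
    (hmean : ∀ i j, ∫ ω, Y i j ω ∂P = 0) (σ τ : Equiv.Perm ι) :
    ∫ ω, (∏ i, Y i (σ i) ω) * ∏ i, Y i (τ i) ω ∂P =
      if σ = τ then ∏ i, ∫ ω, Y i (σ i) ω ^ 2 ∂P else 0 := by
  simp only [fun ω => prod_apply_perm_mul_prod_apply_perm (fun i j => Y i j ω) σ τ]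
  rw [hind.integral_fun_prod_comp
    (f := fun p x => x ^ ((if σ p.1 = p.2 then 1 else 0) + if τ p.1 = p.2 then 1 else 0))
    (fun p => (hmeas p.1 p.2).aemeasurable) fun p => (continuous_pow _).aestronglyMeasurable]
  split_ifs with hστ
  · subst hστ
    rw [prod_apply_perm_eq_prod_pow (fun i j => ∫ ω, Y i j ω ^ 2 ∂P)]
    refine prod_congr rfl fun p _ => ?_
    split_ifs <;> simp
  · obtain ⟨i, hi⟩ : ∃ i, σ i ≠ τ i := by
      by_contra! h
      exact hστ (Equiv.ext h)
    refine prod_eq_zero (mem_univ (i, σ i)) ?_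
    simpa [Ne.symm hi] using hmean i (σ i)

theorem integral_sq_sum_perm_prod [IsProbabilityMeasure P]
    (hmeas : ∀ i j, Measurable (Y i j)) (hind : iIndepFun (fun p : ι × ι => Y p.1 p.2) P)
    (hint : ∀ i j k, Integrable (fun ω => Y i j ω ^ k) P)
    (hmean : ∀ i j, ∫ ω, Y i j ω ∂P = 0) :
    Integrable (fun ω => (∑ σ : Equiv.Perm ι, ∏ i, Y i (σ i) ω) ^ 2) P ∧
      ∫ ω, (∑ σ : Equiv.Perm ι, ∏ i, Y i (σ i) ω) ^ 2 ∂P =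
        ∑ σ : Equiv.Perm ι, ∏ i, ∫ ω, Y i (σ i) ω ^ 2 ∂P := by
  have hcross := integrable_prod_apply_perm_mul_prod_apply_perm hmeas hind hint
  simp only [sq, sum_mul_sum]
  have hrow σ := integrable_finsetSum univ fun τ _ => hcross σ τ
  refine ⟨integrable_finsetSum _ fun σ _ => hrow σ, ?_⟩
  rw [integral_finsetSum _ fun σ _ => hrow σ]
  refine sum_congr rfl fun σ _ => ?_
  rw [integral_finsetSum _ fun τ _ => hcross σ τ]
  simp [← sq, integral_prod_apply_perm_mul_prod_apply_perm hmeas hind hmean]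

theorem integral_sq_sum_perm_prod_le [IsProbabilityMeasure P] {L : ℝ}
    (hmeas : ∀ i j, Measurable (Y i j)) (hind : iIndepFun (fun p : ι × ι => Y p.1 p.2) P)
    (hmb : ∀ i j, MomentBounded P (Y i j) L) (hmean : ∀ i j, ∫ ω, Y i j ω ∂P = 0) :
    Integrable (fun ω => (∑ σ : Equiv.Perm ι, ∏ i, Y i (σ i) ω) ^ 2) P ∧
      ∫ ω, (∑ σ : Equiv.Perm ι, ∏ i, Y i (σ i) ω) ^ 2 ∂P ≤
        (Fintype.card ι).factorial * (2 * L ^ 2) ^ Fintype.card ι := by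
  obtain ⟨hint, hsecond⟩ := integral_sq_sum_perm_prod hmeas hind
    (fun i j => (hmb i j).integrable_pow (hmeas i j).aestronglyMeasurable) hmean
  refine ⟨hint, hsecond ▸ ?_⟩
  calc ∑ σ : Equiv.Perm ι, ∏ i, ∫ ω, Y i (σ i) ω ^ 2 ∂P
      ≤ ∑ _σ : Equiv.Perm ι, ∏ _i : ι, 2 * L ^ 2 :=
        sum_le_sum fun σ _ => prod_le_prod (fun i _ => integral_nonneg fun ω => sq_nonneg _)
          fun i _ => (hmb i (σ i)).integral_sq_le
    _ = (Fintype.card ι).factorial * (2 * L ^ 2) ^ Fintype.card ι := by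
        simp [Fintype.card_perm]

end Permanent

lemma measureReal_le_integral_sq_div_sq {Ω : Type*} [MeasurableSpace Ω] {P : Measure Ω}
    {X : Ω → ℝ} (hX : Integrable (fun ω => X ω ^ 2) P) {a : ℝ} (ha : 0 < a) :
    P.real {ω | a ≤ |X ω|} ≤ (∫ ω, X ω ^ 2 ∂P) / a ^ 2 := by
  have hset : {ω | a ≤ |X ω|} = {ω | a ^ 2 ≤ X ω ^ 2} := by
    ext ω
    simp only [Set.mem_ofPred_eq, ← sq_abs (X ω), sq_le_sq₀ ha.le (abs_nonneg _)]
  rw [hset, le_div_iff₀ (by positivity), mul_comm]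
  exact mul_meas_ge_le_integral_of_nonneg (ae_of_all _ fun ω => sq_nonneg _) hX _

open Real in
lemma le_max_exp_of_le_two_pow_div_sq {p t : ℝ} {n : ℕ} (ht : 0 < t) (hp₁ : p ≤ 1)
    (hp : p ≤ 2 ^ n / t ^ 2) :
    p ≤ max (exp (-n)) (exp 2 * exp (-((exp 1)⁻¹ * t ^ ((2 : ℝ) / n)))) := by
  set s := t ^ ((2 : ℝ) / n)
  by_cases hs : s ≤ 2 * exp 1
  · refine hp₁.trans (le_max_of_le_right ?_)
    have : (exp 1)⁻¹ * s ≤ 2 := by rw [inv_mul_le_iff₀ (exp_pos 1)]; linarith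
    rw [← exp_add, one_le_exp_iff]
    linarith
  · refine hp.trans (le_max_of_le_left ?_)
    have hn : n ≠ 0 := by
      rintro rfl
      simp [s] at hs
      linarith [add_one_le_exp 1]
    have hsn : s ^ n = t ^ 2 := by
      rw [← rpow_natCast, ← rpow_mul ht.le, div_mul_cancel₀ _ (Nat.cast_ne_zero.mpr hn)]
      norm_cast
    calc (2 : ℝ) ^ n / t ^ 2 ≤ 2 ^ n / (2 * exp 1) ^ n := by
          gcongr
          rw [← hsn]
          gcongr
          linarith
      _ = exp (-n) := by
          rw [mul_pow, div_mul_cancel_left₀ (by positivity), ← exp_nat_mul, exp_neg]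
          ring_nf

theorem permanent_concentration :
    ∃ c : ℝ, 0 < c ∧
      ∀ (Ω : Type) (_ : MeasurableSpace Ω) (P : Measure Ω), IsProbabilityMeasure P →
      ∀ (n : ℕ) (Y : Fin n → Fin n → Ω → ℝ),
        (∀ i j, Measurable (Y i j)) →
        iIndepFun (m := fun _ => Real.measurableSpace) (fun p : Fin n × Fin n => Y p.1 p.2) P →
        (∀ i j, MomentBounded P (Y i j) 1) →
        (∀ i j, ∫ ω, Y i j ω ∂P = 0) →
      ∀ t : ℝ, 0 < t →
        (P {ω | t * Real.sqrt (Nat.factorial n) ≤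
            |∑ σ : Equiv.Perm (Fin n), ∏ i, Y i (σ i) ω|}).toReal ≤
          max (Real.exp (-(n : ℝ)))
            (Real.exp 2 * Real.exp (-(c * t ^ ((2 : ℝ) / (n : ℝ))))) := by
  refine ⟨(Real.exp 1)⁻¹, by positivity, ?_⟩
  intro Ω _ P _ n Y hmeas hind hmb hmean t ht
  obtain ⟨hint, hsecond⟩ := integral_sq_sum_perm_prod_le hmeas hind hmb hmean
  have hfac : (0 : ℝ) < n.factorial := mod_cast n.factorial_pos
  refine le_max_exp_of_le_two_pow_div_sq ht measureReal_le_one ?_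
  calc P.real {ω | t * √n.factorial ≤ |∑ σ : Equiv.Perm (Fin n), ∏ i, Y i (σ i) ω|}
      ≤ (∫ ω, (∑ σ : Equiv.Perm (Fin n), ∏ i, Y i (σ i) ω) ^ 2 ∂P) /
          (t * √n.factorial) ^ 2 :=
        measureReal_le_integral_sq_div_sq hint (by positivity)
    _ ≤ n.factorial * 2 ^ n / (t ^ 2 * n.factorial) := by
        rw [mul_pow, Real.sq_sqrt hfac.le]
        gcongr
        simpa using hsecond
    _ = 2 ^ n / t ^ 2 := by field_simp
end

section
/- Let Z be a real random variable that is moment bounded with parameter L > 0, let k ≥ 1 be an integer, let S ⊆ {1,...,k} be nonempty, and let d_t be strictly positive integers for t ∈ S. Set D = Σ_{t∈S} t·d_t and d = Σ_{t∈S} d_t. Then | E[ Π_{t∈S} (Z^t)^{d_t} ] | ≤ min_{t∈S} { L^{D−t} · D! · E[|Z|^t] / t! }, and | E[ Π_{t∈S} (Z^t − E[Z^t])^{d_t} ] | ≤ min_{t∈S} { 2^d · L^{D−t} · D! · E[|Z|^t] / t! }. -/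
open MeasureTheory ProbabilityTheory Finset

open scoped Nat

/-!
Write `m n = E[|Z|^n]`. Moment boundedness says exactly that the normalized moments
`m n / (L^n n!)` decrease, starting from `m 0 = 1`. Hence `m n ≤ L^(n-t) n! m t / t!` for `t ≤ n`,
which is the first bound because the product is `Z^D`. More generally a product of moments
`m A ∏ m (f i)` in which some order is at least `t` is at most `L^(N-t) N! m t / t!`,
`N = A + ∑ f i`, since every normalized moment lies in `[0, 1]` and `A! ∏ (f i)!` divides `N!`.
For the centered product, split it into its `d` factors `Z^s - E[Z^s]`, bound each by
`|Z|^s + m s` and expand: each of the `2^d` terms is such a moment product of total order `D`,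
containing either the factor `m t` or a moment of order at least `t`.
-/

section MomentSequence

variable {m : ℕ → ℝ} {L : ℝ}

theorem antitone_div_pow_mul_factorial (hL : 0 < L)
    (hstep : ∀ i : ℕ, 1 ≤ i → m i ≤ i * L * m (i - 1)) :
    Antitone fun n => m n / (L ^ n * n !) := by
  refine antitone_nat_of_succ_le fun n => ?_
  have h := hstep (n + 1) n.succ_pos
  rw [Nat.add_sub_cancel] at h
  rw [div_le_div_iff₀ (by positivity) (by positivity), Nat.factorial_succ]
  push_cast at h ⊢
  calc m (n + 1) * (L ^ n * n !) ≤ (n + 1) * L * m n * (L ^ n * n !) := by gcongr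
    _ = m n * (L ^ (n + 1) * ((n + 1) * n !)) := by ring

theorem pow_sub_mul_mul_div_factorial (hL : L ≠ 0) {t n : ℕ} (htn : t ≤ n) (c x : ℝ) :
    L ^ (n - t) * c * x / t ! = L ^ n * c * (x / (L ^ t * t !)) := by
  rw [pow_sub₀ _ hL htn]
  field_simp

theorem le_pow_sub_mul_factorial_mul_div (hL : 0 < L)
    (hstep : ∀ i : ℕ, 1 ≤ i → m i ≤ i * L * m (i - 1)) {t n : ℕ} (htn : t ≤ n) :
    m n ≤ L ^ (n - t) * n ! * m t / t ! := by
  rw [pow_sub_mul_mul_div_factorial hL.ne' htn, ← div_le_iff₀' (by positivity)]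
  exact antitone_div_pow_mul_factorial hL hstep htn

theorem Nat.factorial_mul_prod_factorial_le {ι : Type*} (s : Finset ι) (f : ι → ℕ) (A : ℕ) :
    A ! * ∏ i ∈ s, (f i)! ≤ (A + ∑ i ∈ s, f i)! :=
  Nat.le_of_dvd (Nat.factorial_pos _) <|
    (mul_dvd_mul_left _ (Nat.prod_factorial_dvd_factorial_sum s f)).trans
      (Nat.factorial_mul_factorial_dvd_factorial_add _ _)

theorem mul_prod_le_pow_sub_mul_factorial_mul_div (hL : 0 < L) (hm : ∀ n, 0 ≤ m n)
    (hm0 : m 0 = 1) (hstep : ∀ i : ℕ, 1 ≤ i → m i ≤ i * L * m (i - 1))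
    {ι : Type*} (s : Finset ι) (f : ι → ℕ) {A t : ℕ} (ht : t ≤ A ∨ ∃ i ∈ s, t ≤ f i) :
    m A * ∏ i ∈ s, m (f i) ≤
      L ^ (A + ∑ i ∈ s, f i - t) * (A + ∑ i ∈ s, f i)! * m t / t ! := by
  have hanti := antitone_div_pow_mul_factorial hL hstep
  set a : ℕ → ℝ := fun n => m n / (L ^ n * n !) with ha
  have hma (n : ℕ) : m n = L ^ n * n ! * a n := by simp only [ha]; field_simp
  have ha0 (n : ℕ) : 0 ≤ a n := div_nonneg (hm n) (by positivity)
  have ha1 (n : ℕ) : a n ≤ 1 := (hanti n.zero_le).trans_eq (by simp [ha, hm0])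
  have hprod_a : ∏ i ∈ s, a (f i) ≤ 1 := prod_le_one (fun i _ => ha0 _) fun i _ => ha1 _
  have hnormalized : a A * ∏ i ∈ s, a (f i) ≤ a t := by
    rcases ht with htA | ⟨j, hj, htj⟩
    · exact (mul_le_of_le_one_right (ha0 A) hprod_a).trans (hanti htA)
    · refine (mul_le_of_le_one_left (prod_nonneg fun i _ => ha0 _) (ha1 A)).trans ?_
      exact ((prod_le_prod_of_subset_of_le_one (singleton_subset_iff.2 hj) (fun i _ => ha0 _)
        fun i _ _ => ha1 _).trans_eq (prod_singleton _ _)).trans (hanti htj)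
  have htN : t ≤ A + ∑ i ∈ s, f i := by
    rcases ht with htA | ⟨j, hj, htj⟩
    · omega
    · exact htj.trans ((single_le_sum (fun i _ => Nat.zero_le (f i)) hj).trans le_add_self)
  rw [pow_sub_mul_mul_div_factorial hL.ne' htN]
  calc m A * ∏ i ∈ s, m (f i)
      = L ^ (A + ∑ i ∈ s, f i) * ((A ! * ∏ i ∈ s, (f i)! : ℕ) : ℝ) *
          (a A * ∏ i ∈ s, a (f i)) := by
        simp only [hma A, hma (f _), prod_mul_distrib, prod_pow_eq_pow_sum, pow_add]
        push_cast
        ring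
    _ ≤ L ^ (A + ∑ i ∈ s, f i) * (A + ∑ i ∈ s, f i)! * a t := by
        gcongr
        · exact mul_nonneg (ha0 A) (prod_nonneg fun i _ => ha0 _)
        · exact_mod_cast Nat.factorial_mul_prod_factorial_le s f A

end MomentSequence

theorem Finset.prod_pow_eq_prod_sigma {α M : Type*} [CommMonoid M] (S : Finset α) (d : α → ℕ)
    (x : α → M) : ∏ t ∈ S, x t ^ d t = ∏ p ∈ S.sigma fun t => range (d t), x p.1 := by
  rw [prod_sigma]
  simp only [prod_const, card_range]

theorem Finset.prod_abs_pow_add_eq {ι : Type*} [DecidableEq ι] (s : Finset ι) (g : ι → ℕ)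
    (c : ι → ℝ) (x : ℝ) :
    ∏ i ∈ s, (|x| ^ g i + c i) = ∑ J ∈ s.powerset, |x| ^ (∑ i ∈ J, g i) * ∏ i ∈ s \ J, c i := by
  simp_rw [prod_add, prod_pow_eq_pow_sum]

namespace MomentBounded

variable {Ω : Type*} [MeasurableSpace Ω] {P : Measure Ω} {Z : Ω → ℝ} {L : ℝ}

theorem integrable_prod_abs_pow_add (hmb : MomentBounded P Z L) {ι : Type*} [DecidableEq ι]
    (s : Finset ι) (g : ι → ℕ) (c : ι → ℝ) :
    Integrable (fun ω => ∏ i ∈ s, (|Z ω| ^ g i + c i)) P := by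
  simp_rw [prod_abs_pow_add_eq]
  exact integrable_finsetSum _ fun J _ => (hmb.1 _).mul_const _

theorem integral_prod_abs_pow_add (hmb : MomentBounded P Z L) {ι : Type*} [DecidableEq ι]
    (s : Finset ι) (g : ι → ℕ) (c : ι → ℝ) :
    ∫ ω, ∏ i ∈ s, (|Z ω| ^ g i + c i) ∂P =
      ∑ J ∈ s.powerset, (∫ ω, |Z ω| ^ (∑ i ∈ J, g i) ∂P) * ∏ i ∈ s \ J, c i := by
  simp_rw [prod_abs_pow_add_eq]
  rw [integral_finsetSum _ fun J _ => (hmb.1 _).mul_const _]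
  simp_rw [integral_mul_const]

theorem integral_abs_pow_le (hmb : MomentBounded P Z L) (hL : 0 < L) {t n : ℕ} (htn : t ≤ n) :
    ∫ ω, |Z ω| ^ n ∂P ≤ L ^ (n - t) * n ! * (∫ ω, |Z ω| ^ t ∂P) / t ! :=
  le_pow_sub_mul_factorial_mul_div hL hmb.2 htn

theorem integral_abs_pow_mul_prod_le [IsProbabilityMeasure P] (hmb : MomentBounded P Z L)
    (hL : 0 < L) {ι : Type*} (s : Finset ι) (f : ι → ℕ) {A t : ℕ}
    (ht : t ≤ A ∨ ∃ i ∈ s, t ≤ f i) :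
    (∫ ω, |Z ω| ^ A ∂P) * ∏ i ∈ s, ∫ ω, |Z ω| ^ f i ∂P ≤
      L ^ (A + ∑ i ∈ s, f i - t) * (A + ∑ i ∈ s, f i)! * (∫ ω, |Z ω| ^ t ∂P) / t ! :=
  mul_prod_le_pow_sub_mul_factorial_mul_div (m := fun n => ∫ ω, |Z ω| ^ n ∂P) hL
    (fun n => integral_nonneg fun ω => by positivity) (by simp) hmb.2 s f ht

theorem abs_integral_prod_pow_pow_le (hmb : MomentBounded P Z L) (hL : 0 < L) {S : Finset ℕ}
    {d : ℕ → ℕ} {t : ℕ} (ht : t ∈ S) (hdt : 1 ≤ d t) :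
    |∫ ω, ∏ s ∈ S, (Z ω ^ s) ^ d s ∂P| ≤
      L ^ (∑ s ∈ S, s * d s - t) * (∑ s ∈ S, s * d s)! * (∫ ω, |Z ω| ^ t ∂P) / t ! := by
  have htD : t ≤ ∑ s ∈ S, s * d s :=
    (Nat.le_mul_of_pos_right t hdt).trans
      (single_le_sum (f := fun s => s * d s) (fun s _ => Nat.zero_le _) ht)
  simp_rw [← pow_mul, prod_pow_eq_pow_sum]
  calc |∫ ω, Z ω ^ ∑ s ∈ S, s * d s ∂P| ≤ ∫ ω, |Z ω ^ ∑ s ∈ S, s * d s| ∂P :=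
        abs_integral_le_integral_abs
    _ ≤ _ := by simpa only [abs_pow] using hmb.integral_abs_pow_le hL htD

theorem abs_integral_prod_sub_pow_le [IsProbabilityMeasure P] (hmb : MomentBounded P Z L)
    (hL : 0 < L) {S : Finset ℕ} {d : ℕ → ℕ} {t : ℕ} (ht : t ∈ S) (hdt : 1 ≤ d t) :
    |∫ ω, ∏ s ∈ S, (Z ω ^ s - ∫ ω', Z ω' ^ s ∂P) ^ d s ∂P| ≤
      2 ^ (∑ s ∈ S, d s) * L ^ (∑ s ∈ S, s * d s - t) * (∑ s ∈ S, s * d s)! *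
        (∫ ω, |Z ω| ^ t ∂P) / t ! := by
  set F := S.sigma fun s => range (d s)
  set m : ℕ → ℝ := fun n => ∫ ω, |Z ω| ^ n ∂P
  have hsum : ∑ p ∈ F, p.1 = ∑ s ∈ S, s * d s := by
    simp only [F, sum_sigma, sum_const, card_range, smul_eq_mul, mul_comm]
  have hcard : #F = ∑ s ∈ S, d s := by simp [F, card_sigma]
  have hpt (ω : Ω) : |∏ s ∈ S, (Z ω ^ s - ∫ ω', Z ω' ^ s ∂P) ^ d s| ≤
      ∏ p ∈ F, (|Z ω| ^ p.1 + m p.1) := by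
    rw [prod_pow_eq_prod_sigma, abs_prod]
    refine prod_le_prod (fun p _ => abs_nonneg _) fun p _ => (abs_sub _ _).trans ?_
    rw [abs_pow]
    have hmean : |∫ ω', Z ω' ^ p.1 ∂P| ≤ m p.1 := by
      simpa only [abs_pow] using abs_integral_le_integral_abs (μ := P) (f := fun ω => Z ω ^ p.1)
    exact add_le_add_right hmean _
  have hterm : ∀ J ∈ F.powerset, m (∑ p ∈ J, p.1) * ∏ p ∈ F \ J, m p.1 ≤
      L ^ (∑ s ∈ S, s * d s - t) * (∑ s ∈ S, s * d s)! * m t / t ! := by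
    intro J hJ
    have hJF := mem_powerset.1 hJ
    have ht0 : ⟨t, 0⟩ ∈ F := mem_sigma.2 ⟨ht, mem_range.2 hdt⟩
    rw [← hsum, ← sum_sdiff hJF, add_comm]
    refine hmb.integral_abs_pow_mul_prod_le hL (F \ J) Sigma.fst ?_
    by_cases htJ : ⟨t, 0⟩ ∈ J
    · exact Or.inl (single_le_sum (f := Sigma.fst) (fun _ _ => Nat.zero_le _) htJ)
    · exact Or.inr ⟨_, mem_sdiff.2 ⟨ht0, htJ⟩, le_rfl⟩
  calc _ ≤ ∫ ω, |∏ s ∈ S, (Z ω ^ s - ∫ ω', Z ω' ^ s ∂P) ^ d s| ∂P :=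
        abs_integral_le_integral_abs
    _ ≤ ∫ ω, ∏ p ∈ F, (|Z ω| ^ p.1 + m p.1) ∂P :=
        integral_mono_of_nonneg (Filter.Eventually.of_forall fun ω => abs_nonneg _)
          (hmb.integrable_prod_abs_pow_add F _ _) (Filter.Eventually.of_forall hpt)
    _ = ∑ J ∈ F.powerset, m (∑ p ∈ J, p.1) * ∏ p ∈ F \ J, m p.1 :=
        hmb.integral_prod_abs_pow_add F _ _
    _ ≤ ∑ J ∈ F.powerset, L ^ (∑ s ∈ S, s * d s - t) * (∑ s ∈ S, s * d s)! * m t / t ! :=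
        sum_le_sum hterm
    _ = _ := by
        rw [sum_const, card_powerset, hcard, nsmul_eq_mul]
        push_cast
        ring

end MomentBounded

theorem moment_bound_products_general
    (Ω : Type) [MeasurableSpace Ω] (P : Measure Ω) [IsProbabilityMeasure P]
    (Z : Ω → ℝ) (L : ℝ) (hL : 0 < L) (hmb : MomentBounded P Z L)
    (S : Finset ℕ) (hS : S.Nonempty)
    (d : ℕ → ℕ) (hd : ∀ t ∈ S, 1 ≤ d t) :
    |∫ ω, ∏ t ∈ S, (Z ω ^ t) ^ d t ∂P| ≤
      S.inf' hS (fun t =>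
        L ^ ((∑ s ∈ S, s * d s) - t) * (Nat.factorial (∑ s ∈ S, s * d s) : ℝ) *
          (∫ ω, |Z ω| ^ t ∂P) / (Nat.factorial t : ℝ)) ∧
    |∫ ω, ∏ t ∈ S, (Z ω ^ t - ∫ ω', Z ω' ^ t ∂P) ^ d t ∂P| ≤
      S.inf' hS (fun t =>
        2 ^ (∑ s ∈ S, d s) * L ^ ((∑ s ∈ S, s * d s) - t) *
          (Nat.factorial (∑ s ∈ S, s * d s) : ℝ) *
          (∫ ω, |Z ω| ^ t ∂P) / (Nat.factorial t : ℝ)) :=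
  ⟨le_inf' _ _ fun t ht => hmb.abs_integral_prod_pow_pow_le hL ht (hd t ht),
    le_inf' _ _ fun t ht => hmb.abs_integral_prod_sub_pow_le hL ht (hd t ht)⟩

theorem moment_bound_products
    (Ω : Type) [MeasurableSpace Ω] (P : Measure Ω) [IsProbabilityMeasure P]
    (Z : Ω → ℝ) (L : ℝ) (hL : 0 < L) (hZ : Measurable Z) (hmb : MomentBounded P Z L)
    (k : ℕ) (hk : 1 ≤ k) (S : Finset ℕ) (hS : S.Nonempty) (hSk : S ⊆ Finset.Icc 1 k)
    (d : ℕ → ℕ) (hd : ∀ t ∈ S, 1 ≤ d t) :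
    |∫ ω, ∏ t ∈ S, (Z ω ^ t) ^ d t ∂P| ≤
      S.inf' hS (fun t =>
        L ^ ((∑ s ∈ S, s * d s) - t) * (Nat.factorial (∑ s ∈ S, s * d s) : ℝ) *
          (∫ ω, |Z ω| ^ t ∂P) / (Nat.factorial t : ℝ)) ∧
    |∫ ω, ∏ t ∈ S, (Z ω ^ t - ∫ ω', Z ω' ^ t ∂P) ^ d t ∂P| ≤
      S.inf' hS (fun t =>
        2 ^ (∑ s ∈ S, d s) * L ^ ((∑ s ∈ S, s * d s) - t) *
          (Nat.factorial (∑ s ∈ S, s * d s) : ℝ) *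
          (∫ ω, |Z ω| ^ t ∂P) / (Nat.factorial t : ℝ)) :=
  moment_bound_products_general Ω P Z L hL hmb S hS d hd
end

section
/- For any positive integer q, any 0 < ε ≤ 1 and any reals λ > μ_q* > 0, there exist a positive integer m, independent random variables X_1, ..., X_m each taking values in {0,1}, and a multilinear polynomial f of total power q with nonnegative coefficients such that: (i) μ_j(f) ≤ ε^{q−j} μ_q* for all 0 ≤ j ≤ q; (ii) Pr[ f(X) − E[f(X)] ≥ λ ] ≥ exp(−2ε) · ( ε / (4q(λ/μ_q*)^{1/q}) )^{4q(λ/μ_q*)^{1/q}}; and (iii) Pr[ f(X) − E[f(X)] ≥ μ_q* ] ≥ exp(−2ε) · ( ε/(q+1) )^{q+1}. -/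
/-! Take `n = ⌈2qR⌉` independent Bernoulli(`p`) variables, where `R = (λ/μ_q*)^(1/q)` and
`p = ε/n`, and let `f` be `μ_q*` times the elementary symmetric polynomial of degree `q`, so
that `f(X) = μ_q* · C(#{i | X_i = 1}, q)`. Since `np = ε`, every `μ_j(f)` is at most
`μ_q* (np)^(q-j)` and `E f ≤ μ_q* ε^q`. If all `n` variables equal `1`, then
`f = μ_q* C(n, q) ≥ 2λ` because `(n/q)^q ≤ C(n, q)`; if exactly `q + 1` of them do, then
`f = (q + 1) μ_q* ≥ E f + μ_q*`. In both cases the binomial probability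
`C(n, k) p^k (1 - p)^(n-k)` is at least `e^(-2ε) (ε/k)^k`, by `(n/k)^k ≤ C(n, k)` and
`1 - p ≥ e^(-2p)` for `p ≤ 1/2`. -/

open MeasureTheory ProbabilityTheory Finset

/-- The smoothness parameter `μ_r` of a multilinear polynomial `Σ_{h ∈ H} w_h Π_{v ∈ h} x_v`
with respect to random variables `Y`: the maximum, over subsets `h₀` of the vertex set of
cardinality `r`, of `Σ_{h ∈ H, h ⊇ h₀} w_h Π_{v ∈ h \ h₀} E[|Y_v|]`. -/
noncomputable def muMulti {Ω : Type*} [MeasurableSpace Ω] (P : Measure Ω) {n : ℕ}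
    (H : Finset (Finset (Fin n))) (w : Finset (Fin n) → ℝ) (Y : Fin n → Ω → ℝ) (r : ℕ) : ℝ :=
  sSup {x : ℝ | ∃ h₀ : Finset (Fin n), h₀.card = r ∧
    x = ∑ h ∈ H.filter (fun h => h₀ ⊆ h), w h * ∏ v ∈ h \ h₀, ∫ ω, |Y v ω| ∂P}

open unitInterval

theorem Nat.pow_le_choose_mul_pow {n k : ℕ} (h : k ≤ n) : n ^ k ≤ n.choose k * k ^ k := by
  have key : n ^ k * k.descFactorial k ≤ n.descFactorial k * k ^ k := by
    rw [descFactorial_eq_prod_range, descFactorial_eq_prod_range, ← card_range k, ← prod_const,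
      ← prod_const, card_range, ← prod_mul_distrib, ← prod_mul_distrib]
    refine prod_le_prod' fun i hi => ?_
    have hik : i * k ≤ n * i := by nlinarith [mem_range.1 hi]
    rw [Nat.mul_sub, Nat.sub_mul]
    exact Nat.sub_le_sub_left hik _
  rw [descFactorial_self, descFactorial_eq_factorial_mul_choose, mul_comm (n ^ k), mul_assoc] at key
  exact Nat.le_of_mul_le_mul_left key (factorial_pos k)

lemma exp_neg_two_mul_le_one_sub {x : ℝ} (h0 : 0 ≤ x) (h1 : x ≤ 1 / 2) :
    Real.exp (-(2 * x)) ≤ 1 - x := by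
  rw [Real.exp_neg, inv_le_iff_one_le_mul₀ (Real.exp_pos _)]
  nlinarith [Real.add_one_le_exp (2 * x), Real.exp_pos (2 * x)]

lemma choose_mul_pow_le_mul_pow (n k : ℕ) {p : ℝ} (hp : 0 ≤ p) :
    n.choose k * p ^ k ≤ (n * p) ^ k := by
  rw [mul_pow]
  gcongr
  exact_mod_cast Nat.choose_le_pow n k

lemma div_pow_le_choose_mul_pow {n k : ℕ} (hkn : k ≤ n) {p : ℝ} (hp : 0 ≤ p) :
    (n * p / k) ^ k ≤ n.choose k * p ^ k := by
  rcases Nat.eq_zero_or_pos k with rfl | hk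
  · simp
  have hcast : (n : ℝ) ^ k ≤ n.choose k * (k : ℝ) ^ k := by
    exact_mod_cast Nat.pow_le_choose_mul_pow hkn
  rw [div_pow, div_le_iff₀ (by positivity), mul_pow]
  calc (n : ℝ) ^ k * p ^ k ≤ n.choose k * (k : ℝ) ^ k * p ^ k := by gcongr
    _ = _ := by ring

lemma exp_mul_div_pow_le_choose_mul_pow_mul_pow {n k : ℕ} (hk : k ≤ n) {p : ℝ} (hp0 : 0 ≤ p)
    (hp : p ≤ 1 / 2) :
    Real.exp (-(2 * (n * p))) * (n * p / k) ^ k ≤ n.choose k * p ^ k * (1 - p) ^ (n - k) := by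
  have hexp : Real.exp (-(2 * (n * p))) ≤ (1 - p) ^ (n - k) :=
    calc Real.exp (-(2 * (n * p))) = Real.exp (-(2 * p)) ^ n := by
          rw [← Real.exp_nat_mul]; ring_nf
      _ ≤ (1 - p) ^ n :=
          pow_le_pow_left₀ (Real.exp_pos _).le (exp_neg_two_mul_le_one_sub hp0 hp) n
      _ ≤ (1 - p) ^ (n - k) := pow_le_pow_of_le_one (by linarith) (by linarith) (Nat.sub_le n k)
  calc Real.exp (-(2 * (n * p))) * (n * p / k) ^ k
      ≤ (1 - p) ^ (n - k) * (n.choose k * p ^ k) :=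
        mul_le_mul hexp (div_pow_le_choose_mul_pow hk hp0) (by positivity)
          (pow_nonneg (by linarith) _)
    _ = n.choose k * p ^ k * (1 - p) ^ (n - k) := by ring

lemma div_rpow_self_le_div_pow_self {ε T : ℝ} {n : ℕ} (hε : 0 < ε) (hεn : ε ≤ n)
    (hnT : n ≤ T) : (ε / T) ^ T ≤ (ε / n) ^ n := by
  have hn : (0 : ℝ) < n := hε.trans_le hεn
  have hT : 0 < T := hn.trans_le hnT
  calc (ε / T) ^ T ≤ (ε / T) ^ (n : ℝ) :=
        Real.rpow_le_rpow_of_exponent_ge (div_pos hε hT)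
          (div_le_one_of_le₀ (hεn.trans hnT) hT.le) hnT
    _ = (ε / T) ^ n := Real.rpow_natCast _ _
    _ ≤ (ε / n) ^ n :=
        pow_le_pow_left₀ (div_pos hε hT).le (div_le_div_of_nonneg_left hε.le hn hnT) n

lemma two_mul_pow_le_choose {n q : ℕ} {R : ℝ} (hq : 1 ≤ q) (hqn : q ≤ n) (hR : 0 ≤ R)
    (hn : 2 * q * R ≤ n) : 2 * R ^ q ≤ n.choose q := by
  have hchoose : (n : ℝ) ^ q ≤ n.choose q * (q : ℝ) ^ q := by
    exact_mod_cast Nat.pow_le_choose_mul_pow hqn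
  have htwo : (2 : ℝ) ≤ 2 ^ q := by
    simpa using pow_le_pow_right₀ (by norm_num : (1 : ℝ) ≤ 2) hq
  have hpow : 2 ^ q * R ^ q * (q : ℝ) ^ q ≤ n.choose q * (q : ℝ) ^ q :=
    calc 2 ^ q * R ^ q * (q : ℝ) ^ q = (2 * q * R) ^ q := by ring
      _ ≤ (n : ℝ) ^ q := pow_le_pow_left₀ (by positivity [hR]) hn q
      _ ≤ _ := hchoose
  have h2R : 2 ^ q * R ^ q ≤ n.choose q :=
    le_of_mul_le_mul_right hpow (pow_pos (Nat.cast_pos.2 hq) q)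
  nlinarith [pow_nonneg hR q]

section BernoulliCube

variable {ι : Type*}

def boolCoord (i : ι) (ω : ι → Bool) : ℝ := if ω i then 1 else 0

lemma boolCoord_eq_zero_or_one (i : ι) (ω : ι → Bool) :
    boolCoord i ω = 0 ∨ boolCoord i ω = 1 := by
  unfold boolCoord; split <;> simp

variable [Fintype ι]

noncomputable def bernoulliCube (ι : Type*) [Fintype ι] (p : I) : Measure (ι → Bool) :=
  Measure.pi fun _ => Ber(true, false, p)

instance (p : I) : IsProbabilityMeasure (bernoulliCube ι p) := by
  unfold bernoulliCube; infer_instance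

def trueSet (ω : ι → Bool) : Finset ι := {i | ω i}

lemma measurable_boolCoord (i : ι) : Measurable (boolCoord i) := .of_discrete

lemma iIndepFun_boolCoord (p : I) : iIndepFun boolCoord (bernoulliCube ι p) :=
  iIndepFun_pi (X := fun _ (b : Bool) => if b then (1 : ℝ) else 0)
    fun _ => Measurable.of_discrete.aemeasurable

lemma measureReal_bernoulliCube_singleton (p : I) (ω : ι → Bool) :
    (bernoulliCube ι p).real {ω} =
      (p : ℝ) ^ #(trueSet ω) * (1 - p) ^ (Fintype.card ι - #(trueSet ω)) := by
  rw [measureReal_def, bernoulliCube, ← Set.univ_pi_singleton, Measure.pi_pi, ENNReal.toReal_prod]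
  simp_rw [← measureReal_def]
  have hBer : ∀ b : Bool, Ber(true, false, p).real {b} = if b then (p : ℝ) else 1 - p := by
    intro b; cases b <;> simp
  simp_rw [hBer, prod_ite, prod_const]
  have hcompl := card_filter_add_card_filter_not (s := (univ : Finset ι)) (fun i => ω i = true)
  rw [card_univ] at hcompl
  rw [trueSet, ← hcompl, Nat.add_sub_cancel_left]

variable [DecidableEq ι]

lemma prod_boolCoord (h : Finset ι) (ω : ι → Bool) :
    ∏ v ∈ h, boolCoord v ω = if h ⊆ trueSet ω then 1 else 0 := by
  split_ifs with hh
  · exact prod_eq_one fun v hv => by simpa [boolCoord, trueSet] using hh hv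
  · obtain ⟨v, hv, hvω⟩ := not_subset.1 hh
    exact prod_eq_zero hv (by simpa [boolCoord, trueSet] using hvω)

lemma integral_prod_boolCoord (p : I) (h : Finset ι) :
    ∫ ω, ∏ v ∈ h, boolCoord v ω ∂bernoulliCube ι p = (p : ℝ) ^ h.card := by
  let g : ι → Bool → ℝ := fun i b => if i ∈ h then (if b then 1 else 0) else 1
  have hprod : (fun ω => ∏ v ∈ h, boolCoord v ω) = fun ω => ∏ i, g i (ω i) := by
    ext ω
    rw [← Fintype.prod_ite_mem]
    rfl
  rw [hprod, bernoulliCube, integral_fintype_prod_eq_prod]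
  simp_rw [integral_bernoulliMeasure]
  simp [g, apply_ite]

lemma integral_abs_boolCoord (p : I) (v : ι) :
    ∫ ω, |boolCoord v ω| ∂bernoulliCube ι p = p := by
  have habs : ∀ ω, |boolCoord v ω| = ∏ u ∈ {v}, boolCoord u ω := fun ω => by
    rw [prod_singleton, abs_of_nonneg]
    rcases boolCoord_eq_zero_or_one v ω with h | h <;> simp [h]
  simp_rw [habs, integral_prod_boolCoord, card_singleton, pow_one]

lemma trueSet_preimage_singleton (S : Finset ι) :
    trueSet ⁻¹' {S} = {fun i => decide (i ∈ S)} := by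
  ext ω
  simp only [Set.mem_preimage, Set.mem_singleton_iff, trueSet, Finset.ext_iff, mem_filter,
    mem_univ, true_and, funext_iff]
  exact forall_congr' fun i => by cases ω i <;> simp

lemma measureReal_card_trueSet_eq (p : I) (k : ℕ) :
    (bernoulliCube ι p).real {ω | #(trueSet ω) = k} =
      (Fintype.card ι).choose k * p ^ k * (1 - p) ^ (Fintype.card ι - k) := by
  have hfiber : ∀ S ∈ powersetCard k (univ : Finset ι),
      (bernoulliCube ι p).real (trueSet ⁻¹' {S}) = p ^ k * (1 - p) ^ (Fintype.card ι - k) := by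
    intro S hS
    have htrue : trueSet (fun i => decide (i ∈ S)) = S := by ext; simp [trueSet]
    rw [trueSet_preimage_singleton, measureReal_bernoulliCube_singleton, htrue,
      (mem_powersetCard.1 hS).2]
  have hset : {ω | #(trueSet ω) = k} = trueSet ⁻¹' (powersetCard k (univ : Finset ι) : Set (Finset ι)) := by
    ext; simp
  rw [hset, ← sum_measureReal_preimage_singleton _ fun _ _ => .of_discrete, sum_congr rfl hfiber,
    sum_const, card_powersetCard, card_univ, nsmul_eq_mul, mul_assoc]

lemma sum_powersetCard_prod_boolCoord (q : ℕ) (ω : ι → Bool) :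
    ∑ h ∈ powersetCard q univ, ∏ v ∈ h, boolCoord v ω = (#(trueSet ω)).choose q := by
  have hsub : (powersetCard q univ).filter (· ⊆ trueSet ω) = powersetCard q (trueSet ω) := by
    ext h; simp [mem_powersetCard, and_comm]
  simp_rw [prod_boolCoord, sum_boole, hsub, card_powersetCard]

lemma integral_sum_powersetCard_prod_boolCoord (p : I) (c : ℝ) (q : ℕ) :
    ∫ ω, ∑ h ∈ powersetCard q univ, c * ∏ v ∈ h, boolCoord v ω ∂bernoulliCube ι p =
      c * ((Fintype.card ι).choose q * p ^ q) := by
  rw [integral_finsetSum _ fun _ _ => .of_finite]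
  rw [sum_congr rfl fun h hh => by rw [integral_const_mul, integral_prod_boolCoord,
    (mem_powersetCard.1 hh).2], sum_const, card_powersetCard, card_univ, nsmul_eq_mul]
  ring

lemma choose_mul_pow_le_measureReal_mean_add_le {n : ℕ} (hn : Fintype.card ι = n) (p : I)
    {c t : ℝ} {q k : ℕ} (hk : c * (n.choose q * (p : ℝ) ^ q) + t ≤ c * k.choose q) :
    n.choose k * (p : ℝ) ^ k * (1 - p) ^ (n - k) ≤
      (bernoulliCube ι p).real {ω |
        (∫ ω', ∑ h ∈ powersetCard q univ, c * ∏ v ∈ h, boolCoord v ω' ∂bernoulliCube ι p) +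
            t ≤
          ∑ h ∈ powersetCard q univ, c * ∏ v ∈ h, boolCoord v ω} := by
  subst hn
  rw [← measureReal_card_trueSet_eq, integral_sum_powersetCard_prod_boolCoord]
  refine measureReal_mono fun ω (hω : #(trueSet ω) = k) => ?_
  rwa [Set.mem_ofPred_eq, ← mul_sum, sum_powersetCard_prod_boolCoord, hω]

end BernoulliCube

lemma muMulti_powersetCard_le {Ω : Type*} [MeasurableSpace Ω] (P : Measure Ω) {n : ℕ}
    (Y : Fin n → Ω → ℝ) {a c : ℝ} (ha : 0 ≤ a) (hc : 0 ≤ c)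
    (hY : ∀ v, ∫ ω, |Y v ω| ∂P = a) (q j : ℕ) :
    muMulti P (powersetCard q univ) (fun _ => c) Y j ≤ c * (n * a) ^ (q - j) := by
  refine Real.sSup_le ?_ (by positivity)
  rintro x ⟨h₀, hh₀, rfl⟩
  set S := (powersetCard q univ).filter (h₀ ⊆ ·)
  have hcard : ∀ h ∈ S, #(h \ h₀) = q - j := fun h hh => by
    rw [mem_filter, mem_powersetCard] at hh
    rw [card_sdiff_of_subset hh.2, hh.1.2, hh₀]
  have hS : #S ≤ n.choose (q - j) := by
    calc #S ≤ #(powersetCard (q - j) (univ : Finset (Fin n))) :=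
          card_le_card_of_injOn (· \ h₀)
            (fun h hh => by simpa [mem_powersetCard] using hcard h hh)
            (fun h₁ hh₁ h₂ hh₂ heq => by
              rw [← sdiff_union_of_subset (mem_filter.1 hh₁).2,
                ← sdiff_union_of_subset (mem_filter.1 hh₂).2]
              exact congrArg (· ∪ h₀) heq)
      _ = n.choose (q - j) := by rw [card_powersetCard, card_univ, Fintype.card_fin]
  calc ∑ h ∈ S, c * ∏ v ∈ h \ h₀, ∫ ω, |Y v ω| ∂P = #S * (c * a ^ (q - j)) := by
        rw [sum_congr rfl fun h hh => by
          rw [prod_congr rfl fun v _ => hY v, prod_const, hcard h hh], sum_const, nsmul_eq_mul]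
    _ ≤ n ^ (q - j) * (c * a ^ (q - j)) := by
        gcongr
        exact_mod_cast hS.trans (Nat.choose_le_pow n (q - j))
    _ = c * (n * a) ^ (q - j) := by ring


theorem lower_bound_one (q : ℕ) (hq : 1 ≤ q) (ε : ℝ) (hε0 : 0 < ε) (hε1 : ε ≤ 1)
    (lam μq : ℝ) (hμq : 0 < μq) (hlam : μq < lam) :
    ∃ (m : ℕ) (Ω : Type) (_ : MeasurableSpace Ω) (P : Measure Ω)
      (X : Fin m → Ω → ℝ) (H : Finset (Finset (Fin m))) (w : Finset (Fin m) → ℝ),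
      IsProbabilityMeasure P ∧
      (∀ i, Measurable (X i)) ∧
      iIndepFun X P ∧
      (∀ i ω, X i ω = 0 ∨ X i ω = 1) ∧
      (∀ h ∈ H, h.card ≤ q) ∧
      (∀ h ∈ H, 0 ≤ w h) ∧
      (∀ j ≤ q, muMulti P H w X j ≤ ε ^ (q - j) * μq) ∧
      (Real.exp (-(2 * ε)) *
          (ε / (4 * q * (lam / μq) ^ ((q : ℝ)⁻¹))) ^ (4 * (q : ℝ) * (lam / μq) ^ ((q : ℝ)⁻¹)) ≤
        (P {ω | (∫ ω', ∑ h ∈ H, w h * ∏ v ∈ h, X v ω' ∂P) + lam ≤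
            ∑ h ∈ H, w h * ∏ v ∈ h, X v ω}).toReal) ∧
      (Real.exp (-(2 * ε)) * (ε / (q + 1)) ^ (q + 1) ≤
        (P {ω | (∫ ω', ∑ h ∈ H, w h * ∏ v ∈ h, X v ω' ∂P) + μq ≤
            ∑ h ∈ H, w h * ∏ v ∈ h, X v ω}).toReal) := by
  set R := (lam / μq) ^ ((q : ℝ)⁻¹)
  have hq1 : (1 : ℝ) ≤ q := Nat.one_le_cast.2 hq
  have hR : 1 ≤ R := Real.one_le_rpow ((one_le_div hμq).2 hlam.le) (by positivity)
  have hRq : μq * R ^ q = lam := by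
    rw [Real.rpow_inv_natCast_pow (div_pos (hμq.trans hlam) hμq).le (by omega),
      mul_div_cancel₀ _ hμq.ne']
  have h2qR : 2 * q ≤ 2 * q * R := by nlinarith
  set n := ⌈2 * q * R⌉₊
  have hn_lower : 2 * q * R ≤ n := Nat.le_ceil _
  have hn_upper : (n : ℝ) ≤ 4 * q * R := by
    linarith [Nat.ceil_le_two_mul (a := 2 * q * R) (by linarith)]
  have hqn : q + 1 ≤ n := by exact_mod_cast (by push_cast; linarith : ((q + 1 : ℕ) : ℝ) ≤ n)
  have hn : (2 : ℝ) ≤ n := by exact_mod_cast (by omega : 2 ≤ n)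
  set p : I := ⟨ε / n, by positivity, div_le_one_of_le₀ (by linarith) (by linarith)⟩
  have hnp : n * (p : ℝ) = ε := mul_div_cancel₀ _ (by positivity)
  have hp : (p : ℝ) ≤ 1 / 2 := by
    rw [div_le_div_iff₀ (by positivity) (by norm_num)]
    linarith
  refine ⟨n, Fin n → Bool, inferInstance, bernoulliCube (Fin n) p, boolCoord,
    powersetCard q univ, fun _ => μq, inferInstance, measurable_boolCoord, iIndepFun_boolCoord p,
    boolCoord_eq_zero_or_one, fun h hh => (mem_powersetCard.1 hh).2.le, fun _ _ => hμq.le,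
    fun j _ => ?_, ?_, ?_⟩
  · calc muMulti _ _ _ _ j ≤ μq * (n * p) ^ (q - j) :=
          muMulti_powersetCard_le _ _ p.2.1 hμq.le (integral_abs_boolCoord p) q j
      _ = ε ^ (q - j) * μq := by rw [hnp, mul_comm]
  · have hdev : μq * (n.choose q * (p : ℝ) ^ q) + lam ≤ μq * n.choose q := by
      have hC : 2 * R ^ q ≤ n.choose q :=
        two_mul_pow_le_choose hq (by omega) (by linarith) hn_lower
      have hpq : (p : ℝ) ^ q ≤ 1 / 2 := (pow_le_of_le_one p.2.1 p.2.2 (by omega)).trans hp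
      have hmean : (n.choose q : ℝ) * p ^ q ≤ n.choose q * (1 / 2) := by gcongr
      nlinarith
    calc Real.exp (-(2 * ε)) * (ε / (4 * q * R)) ^ (4 * q * R)
        ≤ Real.exp (-(2 * (n * p))) * (n * p / n) ^ n := by
          rw [hnp]; gcongr; exact div_rpow_self_le_div_pow_self hε0 (by linarith) hn_upper
      _ ≤ n.choose n * (p : ℝ) ^ n * (1 - p) ^ (n - n) :=
          exp_mul_div_pow_le_choose_mul_pow_mul_pow le_rfl p.2.1 hp
      _ ≤ _ := choose_mul_pow_le_measureReal_mean_add_le (Fintype.card_fin n) p hdev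
  · have hdev : μq * (n.choose q * (p : ℝ) ^ q) + μq ≤ μq * (q + 1).choose q := by
      have hmean : (n.choose q : ℝ) * p ^ q ≤ 1 :=
        (choose_mul_pow_le_mul_pow n q p.2.1).trans (by rw [hnp]; exact pow_le_one₀ hε0.le hε1)
      rw [Nat.choose_succ_self_right]
      push_cast
      nlinarith
    calc Real.exp (-(2 * ε)) * (ε / (q + 1)) ^ (q + 1)
        = Real.exp (-(2 * (n * p))) * (n * p / ↑(q + 1)) ^ (q + 1) := by rw [hnp]; push_cast; rfl
      _ ≤ n.choose (q + 1) * (p : ℝ) ^ (q + 1) * (1 - p) ^ (n - (q + 1)) :=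
          exp_mul_div_pow_le_choose_mul_pow_mul_pow hqn p.2.1 hp
      _ ≤ _ := choose_mul_pow_le_measureReal_mean_add_le (Fintype.card_fin n) p hdev
end

section
/- Let c ≥ 1 and q ≥ 2 be integers, and let z_1, ..., z_c be real numbers with z_i ≥ q − 1 for every i. Set Z = Σ_{i=1}^c z_i. Then Π_{i=1}^c (z_i/Z)^{z_i} ≤ (1/c)^{(c−1)(q−1)}. -/
open Finset

theorem gibbs_optimization (c q : ℕ) (hc : 1 ≤ c) (hq : 2 ≤ q) (z : Fin c → ℝ)
    (hz : ∀ i, (q : ℝ) - 1 ≤ z i) :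
    ∏ i, (z i / ∑ j, z j) ^ (z i) ≤ ((1 : ℝ) / c) ^ ((c - 1) * (q - 1)) := by
  set Z : ℝ := ∑ j, z j with hZ
  have hq1 : (1 : ℝ) ≤ (q : ℝ) - 1 := by
    have : (2 : ℝ) ≤ (q : ℝ) := by exact_mod_cast hq
    linarith
  have hzpos : ∀ i, 0 < z i := fun i => lt_of_lt_of_le (by linarith [hq1]) (hz i)
  have hne : (Finset.univ : Finset (Fin c)).Nonempty := by
    simpa [Finset.univ_nonempty_iff] using Fin.pos_iff_nonempty.mp hc
  have hZpos : 0 < Z := Finset.sum_pos (fun i _ => hzpos i) hne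
  have hx1 : ∀ i, z i / Z ≤ 1 := by
    intro i
    rw [div_le_one hZpos]
    exact Finset.single_le_sum (fun j _ => (hzpos j).le) (Finset.mem_univ i)
  have hxpos : ∀ i, 0 < z i / Z := fun i => div_pos (hzpos i) hZpos
  -- Step 1: decrease exponents to q - 1
  have step1 : ∏ i, (z i / Z) ^ (z i) ≤ ∏ i, (z i / Z) ^ ((q : ℝ) - 1) := by
    apply Finset.prod_le_prod
    · intro i _; exact Real.rpow_nonneg (hxpos i).le _
    · intro i _
      exact Real.rpow_le_rpow_of_exponent_ge (hxpos i) (hx1 i) (hz i)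
  -- AM-GM: ∏ (z i / Z) ≤ (1/c)^c
  have amgm : ∏ i, (z i / Z) ≤ ((1 : ℝ) / c) ^ c := by
    have hcpos : (0 : ℝ) < c := by exact_mod_cast hc
    have hw : ∑ _i : Fin c, (1 : ℝ) / c = 1 := by
      simp [Finset.sum_const, mul_comm]
      field_simp
    have h := Real.geom_mean_le_arith_mean_weighted Finset.univ
      (fun _ => (1 : ℝ) / c) (fun i => z i / Z)
      (fun i _ => by positivity) hw (fun i _ => (hxpos i).le)
    have hsum : ∑ i, ((1 : ℝ) / c) * (z i / Z) = 1 / c := by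
      rw [← Finset.mul_sum, ← Finset.sum_div, ← hZ, div_self hZpos.ne', mul_one]
    rw [hsum] at h
    have hprod : ∏ i, (z i / Z) ^ ((1 : ℝ) / c) = (∏ i, z i / Z) ^ ((1 : ℝ) / c) := by
      rw [← Real.finset_prod_rpow _ _ (fun i _ => (hxpos i).le)]
    rw [hprod] at h
    have hP : 0 ≤ ∏ i, z i / Z := Finset.prod_nonneg fun i _ => (hxpos i).le
    calc ∏ i, z i / Z = ((∏ i, z i / Z) ^ ((1 : ℝ) / c)) ^ (c : ℕ) := by
          rw [← Real.rpow_natCast ((∏ i, z i / Z) ^ ((1 : ℝ) / c)) c,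
            ← Real.rpow_mul hP, one_div, inv_mul_cancel₀ hcpos.ne', Real.rpow_one]
      _ ≤ ((1 : ℝ) / c) ^ (c : ℕ) :=
          pow_le_pow_left₀ (Real.rpow_nonneg hP _) h c
  -- Step 2: rewrite and combine
  have hcast : ((q : ℝ) - 1) = ((q - 1 : ℕ) : ℝ) := by
    have : (1 : ℕ) ≤ q := by omega
    push_cast [this]
    ring
  have step2 : ∏ i, (z i / Z) ^ ((q : ℝ) - 1) ≤ ((1 : ℝ) / c) ^ (c * (q - 1)) := by
    rw [hcast]
    calc ∏ i, (z i / Z) ^ ((q - 1 : ℕ) : ℝ)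
        = ∏ i, (z i / Z) ^ (q - 1 : ℕ) := by
          exact Finset.prod_congr rfl fun i _ => Real.rpow_natCast _ _
      _ = (∏ i, z i / Z) ^ (q - 1 : ℕ) := by rw [Finset.prod_pow]
      _ ≤ (((1 : ℝ) / c) ^ c) ^ (q - 1 : ℕ) :=
          pow_le_pow_left₀ (Finset.prod_nonneg fun i _ => (hxpos i).le) amgm _
      _ = ((1 : ℝ) / c) ^ (c * (q - 1)) := by rw [← pow_mul]
  have step3 : ((1 : ℝ) / c) ^ (c * (q - 1)) ≤ ((1 : ℝ) / c) ^ ((c - 1) * (q - 1)) := by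
    apply pow_le_pow_of_le_one
    · positivity
    · rw [div_le_one (by exact_mod_cast hc)]
      exact_mod_cast hc
    · exact Nat.mul_le_mul_right _ (Nat.sub_le c 1)
  exact le_trans step1 (le_trans step2 step3)
end

section
/- For every real μ ≥ 27 and every real λ with 0 < λ ≤ μ, there exists a binomially distributed random variable Z with E[Z] = μ such that Pr[ Z ≥ E[Z] + λ ] ≥ exp( −100 − λ²/E[Z] ). -/
/-!
Take `n = ⌈4μ⌉` trials with success probability `p = μ / n`. The tail `Pr[Z ≥ μ + λ]` is at least
the mass of the `⌈√μ⌉` values `j` just above `μ + λ`. By Stirling's formula each of them has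
probability at least of order `n^{-1/2} (μ/j)^j ((n-μ)/(n-j))^(n-j)`. The logarithm of the last
two factors is minus a relative entropy, which is at most
`(j-μ)²/(2μ) + (j-μ)²/(n-μ) ≤ 98 + λ²/μ` because `j - μ ≤ λ + √μ + 1` and `n - μ ≥ 3μ`. Summing `⌈√μ⌉` terms cancels the factor `n^{-1/2}`.
-/

open MeasureTheory ProbabilityTheory Finset
open Real unitInterval
open scoped Nat

section
variable {ι : Type*} [Fintype ι] (p : I)

lemma pi_bernoulliMeasure_real_singleton (ω : ι → Bool) :
    (Measure.pi fun _ : ι ↦ Ber(true, false, p)).real {ω} =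
      p ^ #{i | ω i} * (1 - p : ℝ) ^ (Fintype.card ι - #{i | ω i}) := by
  have hfactor (i : ι) : Ber(true, false, p).real {ω i} = if ω i then (p : ℝ) else 1 - p := by
    cases ω i <;> simp
  rw [measureReal_def, Measure.pi_singleton, ENNReal.toReal_prod]
  simp_rw [← measureReal_def, hfactor]
  rw [prod_ite, prod_const, prod_const, ← card_univ,
    ← card_filter_add_card_filter_not (s := univ) (fun i ↦ ω i = true), Nat.add_sub_cancel_left]

lemma card_filter_card_eq_choose [DecidableEq ι] (k : ℕ) :
    #{ω : ι → Bool | #{i | ω i} = k} = (Fintype.card ι).choose k := by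
  rw [← card_univ, ← card_powersetCard]
  refine card_nbij' (fun ω ↦ ({i | ω i} : Finset ι)) (fun s i ↦ i ∈ s) ?_ ?_ ?_ ?_ <;>
    intro x <;> simp +contextual

lemma map_card_pi_bernoulliMeasure :
    (Measure.pi fun _ : ι ↦ Ber(true, false, p)).map (fun ω ↦ #{i | ω i}) =
      Bin(Fintype.card ι, p) := by
  classical
  refine Measure.ext_of_measureReal_singleton fun k ↦ ?_
  rw [map_measureReal_apply .of_discrete (measurableSet_singleton k), binomial_real_singleton]
  have : (fun ω : ι → Bool ↦ #{i | ω i}) ⁻¹' {k} =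
      ({ω : ι → Bool | #{i | ω i} = k} : Finset _) := by
    ext; simp
  rw [this, ← sum_measureReal_singleton,
    sum_congr rfl fun ω hω ↦ by rw [pi_bernoulliMeasure_real_singleton, (mem_filter.1 hω).2],
    sum_const, card_filter_card_eq_choose, nsmul_eq_mul, mul_assoc]
end

lemma factorial_le_stirling {n : ℕ} (hn : n ≠ 0) :
    (n ! : ℝ) ≤ exp 1 * √n * (n / exp 1) ^ n := by
  have h : Stirling.stirlingSeq n ≤ exp 1 / √2 := by
    obtain ⟨m, rfl⟩ := Nat.exists_eq_succ_of_ne_zero hn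
    simpa [Stirling.stirlingSeq_one] using Stirling.stirlingSeq'_antitone (Nat.zero_le m)
  rw [Stirling.stirlingSeq, div_le_div_iff₀ (by positivity) (by positivity),
    sqrt_mul zero_le_two] at h
  exact le_of_mul_le_mul_right (h.trans_eq (by ring)) (by positivity)

lemma le_add_choose_stirling {j d : ℕ} (hj : j ≠ 0) (hd : d ≠ 0) :
    2 * √(2 * π) / (exp 1 ^ 2 * √(j + d)) * ((j + d) ^ (j + d) / (j ^ j * d ^ d)) ≤
      ((j + d).choose j : ℝ) := by
  have hj0 : (0 : ℝ) < j := by positivity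
  have hd0 : (0 : ℝ) < d := by positivity
  have hjd := Stirling.le_factorial_stirling (j + d)
  have hjf := factorial_le_stirling hj
  have hdf := factorial_le_stirling hd
  have hamgm : 2 / √(j + d) ≤ √(j + d) / (√j * √d) := by
    rw [div_le_div_iff₀ (by positivity) (by positivity), mul_self_sqrt (by positivity)]
    nlinarith [sq_nonneg (√j - √d), sq_sqrt hj0.le, sq_sqrt hd0.le]
  rw [Nat.cast_add_choose]
  calc _ = √(2 * π) / exp 1 ^ 2 * (2 / √(j + d)) * ((j + d) ^ (j + d) / (j ^ j * d ^ d)) := by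
        ring
    _ ≤ √(2 * π) / exp 1 ^ 2 * (√(j + d) / (√j * √d)) * ((j + d) ^ (j + d) / (j ^ j * d ^ d)) := by
        gcongr
    _ = √(2 * π * ↑(j + d)) * (↑(j + d) / exp 1) ^ (j + d) /
        (exp 1 * √j * (j / exp 1) ^ j * (exp 1 * √d * (d / exp 1) ^ d)) := by
        push_cast
        rw [div_pow, div_pow, div_pow]
        field_simp
        rw [pow_add, sqrt_mul (x := 2 * π) (by positivity)]
        ring
    _ ≤ _ := by gcongr

lemma mul_log_div_le_of_le {m x : ℝ} (hm : 0 < m) (hx : m ≤ x) :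
    x * log (x / m) ≤ (x - m) + (x - m) ^ 2 / (2 * m) := by
  have hu : 1 ≤ x / m := (one_le_div hm).2 hx
  have hx0 : 0 < x := hm.trans_le hx
  -- `log u ≤ sinh (log u) = (u - u⁻¹) / 2`
  have hsinh := self_le_sinh_iff.2 (log_nonneg hu)
  rw [sinh_eq, exp_neg, exp_log (by positivity)] at hsinh
  calc x * log (x / m) ≤ x * ((x / m - (x / m)⁻¹) / 2) := by gcongr
    _ = _ := by field_simp; ring

lemma div_pow_eq_exp_neg_mul_log {k : ℕ} (hk : k ≠ 0) {y : ℝ} (hy : 0 < y) :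
    (y / k) ^ k = exp (-(k * log (k / y))) := by
  rw [← mul_neg, ← log_inv, inv_div, ← log_pow, exp_log (by positivity)]

lemma exp_le_div_pow_mul_div_pow {μ : ℝ} {j d : ℕ} (hd : d ≠ 0) (hμ : 0 < μ) (hμj : μ ≤ j) :
    exp (-((j - μ) ^ 2 / (2 * μ)) - (j - μ) ^ 2 / (j + d - μ)) ≤
      (μ / j) ^ j * ((j + d - μ) / d) ^ d := by
  have hj : j ≠ 0 := by rintro rfl; simp at hμj; linarith
  have hd0 : (0 : ℝ) < d := by positivity
  have hν : 0 < (j + d - μ : ℝ) := by linarith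
  have hj_log := mul_log_div_le_of_le hμ hμj
  have hd_log : d * log (d / (j + d - μ)) ≤ d * (d / (j + d - μ) - 1) := by
    gcongr; exact log_le_sub_one_of_pos (by positivity)
  rw [div_pow_eq_exp_neg_mul_log hj hμ, div_pow_eq_exp_neg_mul_log hd hν, ← exp_add, exp_le_exp]
  have : d * (d / (j + d - μ) - 1) = -(j - μ) + (j - μ) ^ 2 / (j + d - μ) := by
    field_simp; ring
  linarith

lemma le_choose_mul_pow_mul_pow {μ : ℝ} {n j : ℕ} (hμ : 0 < μ) (hμj : μ ≤ j) (hjn : j < n) :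
    2 * √(2 * π) / (exp 1 ^ 2 * √n) * exp (-((j - μ) ^ 2 / (2 * μ)) - (j - μ) ^ 2 / (n - μ)) ≤
      n.choose j * (μ / n) ^ j * (1 - μ / n) ^ (n - j) := by
  obtain ⟨d, rfl⟩ := Nat.exists_eq_add_of_le hjn.le
  have hd : d ≠ 0 := by omega
  have hj : j ≠ 0 := by rintro rfl; simp at hμj; linarith
  rw [Nat.add_sub_cancel_left]
  push_cast
  calc _ ≤ 2 * √(2 * π) / (exp 1 ^ 2 * √(j + d)) * ((μ / j) ^ j * ((j + d - μ) / d) ^ d) := by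
        gcongr; exact exp_le_div_pow_mul_div_pow hd hμ hμj
    _ = 2 * √(2 * π) / (exp 1 ^ 2 * √(j + d)) * ((j + d) ^ (j + d) / (j ^ j * d ^ d)) *
        ((μ / (j + d)) ^ j * (1 - μ / (j + d)) ^ d) := by
        rw [one_sub_div (by positivity), div_pow, div_pow, div_pow, div_pow, pow_add]
        field_simp
    _ ≤ _ := by
        rw [mul_assoc _ ((μ / (j + d)) ^ j)]
        gcongr
        · have : μ / (j + d) ≤ 1 := (div_le_one (by positivity)).2 (by linarith)
          exact mul_nonneg (by positivity) (pow_nonneg (by linarith) _)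
        · exact le_add_choose_stirling hj hd

lemma sq_div_add_sq_div_le {μ lam a ν : ℝ} (hμ : 27 ≤ μ) (hlam : 0 < lam) (hlamμ : lam ≤ μ)
    (ha0 : 0 ≤ a) (ha : a ≤ lam + √μ + 1) (hν : 3 * μ ≤ ν) :
    a ^ 2 / (2 * μ) + a ^ 2 / ν ≤ 98 + lam ^ 2 / μ := by
  have hs : 5 ≤ √μ := le_sqrt_of_sq_le (by linarith)
  have hs2 : √μ ^ 2 = μ := sq_sqrt (by linarith)
  have hμ0 : 0 < μ := by linarith
  have hkey : 5 * a ^ 2 ≤ 588 * μ + 6 * lam ^ 2 := by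
    have : a ^ 2 ≤ (lam + √μ + 1) ^ 2 := by gcongr
    nlinarith [sq_nonneg (lam - 6 * √μ)]
  calc a ^ 2 / (2 * μ) + a ^ 2 / ν ≤ a ^ 2 / (2 * μ) + a ^ 2 / (3 * μ) := by gcongr
    _ = 5 * a ^ 2 / (6 * μ) := by field_simp; ring
    _ ≤ (588 * μ + 6 * lam ^ 2) / (6 * μ) := by gcongr
    _ = 98 + lam ^ 2 / μ := by field_simp; ring

lemma exp_div_sqrt_le_choose_mul_pow_mul_pow {μ lam : ℝ} (hμ : 27 ≤ μ) (hlam : 0 < lam)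
    (hlamμ : lam ≤ μ) {n j : ℕ} (hn : 4 * μ ≤ n) (hn' : n ≤ 4 * μ + 1) (hj : μ + lam ≤ j)
    (hj' : j ≤ μ + lam + √μ + 1) :
    exp (-100 - lam ^ 2 / μ) / √μ ≤ n.choose j * (μ / n) ^ j * (1 - μ / n) ^ (n - j) := by
  have hμ0 : 0 < μ := by linarith
  have hs : 5 ≤ √μ := le_sqrt_of_sq_le (by linarith)
  have hs2 : √μ ^ 2 = μ := sq_sqrt hμ0.le
  have hjn : j < n := by exact_mod_cast (show (j : ℝ) < n by nlinarith)
  have hexponent := sq_div_add_sq_div_le hμ hlam hlamμ (a := j - μ) (ν := n - μ)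
    (by linarith) (by linarith) (by linarith)
  have hsqrt : √n ≤ 2 * √(2 * π) * √μ := by
    rw [show 2 * √(2 * π) * √μ = √(2 ^ 2 * (2 * π) * μ) by
      rw [sqrt_mul (by positivity) μ, sqrt_mul (by positivity) (2 * π), sqrt_sq zero_le_two]]
    exact sqrt_le_sqrt (by nlinarith [pi_gt_three])
  set E := exp (-((j - μ) ^ 2 / (2 * μ)) - (j - μ) ^ 2 / (n - μ))
  calc exp (-100 - lam ^ 2 / μ) / √μ ≤ exp (-2) * E / √μ := by
        rw [← exp_add]; gcongr; linarith
    _ = 2 * √(2 * π) / (exp 1 ^ 2 * (2 * √(2 * π) * √μ)) * E := by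
        rw [exp_one_pow, exp_neg]; push_cast; field_simp
    _ ≤ 2 * √(2 * π) / (exp 1 ^ 2 * √n) * E := by
        gcongr; exact mul_pos (by positivity) (sqrt_pos.2 (by linarith))
    _ ≤ _ := le_choose_mul_pow_mul_pow hμ0 (by linarith) hjn

lemma exp_le_sum_choose_mul_pow_mul_pow {μ lam : ℝ} (hμ : 27 ≤ μ) (hlam : 0 < lam)
    (hlamμ : lam ≤ μ) {n : ℕ} (hn : 4 * μ ≤ n) (hn' : n ≤ 4 * μ + 1) :
    exp (-100 - lam ^ 2 / μ) ≤ ∑ j ∈ Ico ⌈μ + lam⌉₊ (⌈μ + lam⌉₊ + ⌈√μ⌉₊),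
      n.choose j * (μ / n) ^ j * (1 - μ / n) ^ (n - j) := by
  set k := ⌈μ + lam⌉₊
  set m := ⌈√μ⌉₊
  have hk : (k : ℝ) < μ + lam + 1 := Nat.ceil_lt_add_one (by linarith)
  have hm : √μ ≤ m := Nat.le_ceil _
  have hm' : (m : ℝ) < √μ + 1 := Nat.ceil_lt_add_one (sqrt_nonneg _)
  have hsqrt : 0 < √μ := sqrt_pos.2 (by linarith)
  have hterm : ∀ j ∈ Ico k (k + m),
      exp (-100 - lam ^ 2 / μ) / m ≤ n.choose j * (μ / n) ^ j * (1 - μ / n) ^ (n - j) := by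
    intro j hj
    obtain ⟨hkj, hjm⟩ := mem_Ico.1 hj
    have hkj : μ + lam ≤ j := (Nat.le_ceil _).trans (by exact_mod_cast hkj)
    have hjm : (j : ℝ) + 1 ≤ k + m := by exact_mod_cast hjm
    calc exp (-100 - lam ^ 2 / μ) / m ≤ exp (-100 - lam ^ 2 / μ) / √μ := by gcongr
      _ ≤ _ := exp_div_sqrt_le_choose_mul_pow_mul_pow hμ hlam hlamμ hn hn' hkj (by linarith)
  calc exp (-100 - lam ^ 2 / μ) = (Ico k (k + m)).card • (exp (-100 - lam ^ 2 / μ) / m) := by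
        rw [Nat.card_Ico, Nat.add_sub_cancel_left, nsmul_eq_mul,
          mul_div_cancel₀ _ (hsqrt.trans_le hm).ne']
    _ ≤ _ := card_nsmul_le_sum _ _ _ hterm

theorem binomial_tail_lower_bound (μ : ℝ) (hμ : 27 ≤ μ) (lam : ℝ) (hlam0 : 0 < lam)
    (hlamμ : lam ≤ μ) :
    ∃ (n : ℕ) (p : ℝ) (Ω : Type) (_ : MeasurableSpace Ω) (P : Measure Ω)
      (X : Fin n → Ω → ℝ),
      IsProbabilityMeasure P ∧
      0 ≤ p ∧ p ≤ 1 ∧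
      (∀ i, Measurable (X i)) ∧
      iIndepFun X P ∧
      (∀ i ω, X i ω = 0 ∨ X i ω = 1) ∧
      (∀ i, (P {ω | X i ω = 1}).toReal = p) ∧
      (n : ℝ) * p = μ ∧
      Real.exp (-100 - lam ^ 2 / μ) ≤ (P {ω | μ + lam ≤ ∑ i, X i ω}).toReal := by
  set n := ⌈4 * μ⌉₊
  have hn : 4 * μ ≤ n := Nat.le_ceil _
  have hn' : (n : ℝ) < 4 * μ + 1 := Nat.ceil_lt_add_one (by linarith)
  have hn0 : (0 : ℝ) < n := by linarith
  let p : I := ⟨μ / n, by positivity, (div_le_one hn0).2 (by linarith)⟩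
  let g : Bool → ℝ := fun b ↦ if b then 1 else 0
  refine ⟨n, p, Fin n → Bool, inferInstance, Measure.pi fun _ ↦ Ber(true, false, p),
    fun i ω ↦ g (ω i), inferInstance, p.2.1, p.2.2, fun i ↦ .of_discrete,
    iIndepFun_pi fun _ ↦ .of_discrete, fun i ω ↦ by cases ω i <;> simp [g], fun i ↦ ?_,
    mul_div_cancel₀ μ hn0.ne', ?_⟩
  · have : {ω : Fin n → Bool | g (ω i) = 1} = Function.eval i ⁻¹' ({true} : Set Bool) := by
      ext ω; cases ω i <;> simp [g]
    rw [this, ← measureReal_def, (measurePreserving_eval _ i).measureReal_preimage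
      (measurableSet_singleton true).nullMeasurableSet]
    simp
  · set J := Ico ⌈μ + lam⌉₊ (⌈μ + lam⌉₊ + ⌈√μ⌉₊)
    have hlaw := map_card_pi_bernoulliMeasure (ι := Fin n) p
    rw [Fintype.card_fin] at hlaw
    calc exp (-100 - lam ^ 2 / μ)
        ≤ ∑ j ∈ J, n.choose j * (μ / n) ^ j * (1 - μ / n) ^ (n - j) :=
          exp_le_sum_choose_mul_pow_mul_pow hμ hlam0 hlamμ hn hn'.le
      _ = Bin(n, p).real J := by
          rw [← sum_measureReal_singleton]
          exact sum_congr rfl fun j _ ↦ (binomial_real_singleton n j p).symm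
      _ = (Measure.pi fun _ ↦ Ber(true, false, p)).real {ω | #{i | ω i} ∈ J} := by
          rw [← hlaw, map_measureReal_apply .of_discrete .of_discrete]
          rfl
      _ ≤ _ := by
          refine measureReal_mono fun ω hω ↦ ?_
          have hcard : μ + lam ≤ #{i | ω i} := (Nat.le_ceil _).trans
            (by exact_mod_cast (mem_Ico.1 hω).1)
          simpa [g, sum_boole] using hcard
end

section
/- Let X be a nonnegative real random variable with a log-concave probability density function f. Then X is moment bounded with parameter L = E[X]; that is, for every integer i ≥ 1, E[X^i] ≤ i · E[X] · E[X^{i−1}]. -/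
/-!
Log-concavity of the density passes to its tail integral, and this makes the survival function
`Ḡ t = P (X > t)` *new better than used*: `Ḡ (s + t) ≤ Ḡ s * Ḡ t`. By the layer-cake formula,
`E[X^(k+1)] = (k+1) ∫_0^∞ t^k Ḡ t dt`; applied once more to the measure `Ḡ t dt` it gives
`∫ t^(k+1) Ḡ t dt = (k+1) ∫ s^k (∫_s^∞ Ḡ) ds`, and NBU bounds the inner integral by `Ḡ s * E[X]`,
which is the moment recursion. `E[X] < ∞` because NBU forces `Ḡ (n t₀) ≤ Ḡ t₀ ^ n`.
-/

open MeasureTheory ProbabilityTheory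

open Set ENNReal Filter Topology

def IsNewBetterThanUsed (g : ℝ → ℝ≥0∞) : Prop :=
  ∀ s t, 0 ≤ s → 0 ≤ t → g (s + t) ≤ g s * g t

theorem lintegral_ofReal_pow_succ_eq {α : Type*} [MeasurableSpace α] (μ : Measure α) {f : α → ℝ}
    (hf : 0 ≤ᵐ[μ] f) (hfm : AEMeasurable f μ) (k : ℕ) :
    ∫⁻ a, ENNReal.ofReal (f a ^ (k + 1)) ∂μ =
      (k + 1) * ∫⁻ t in Ioi 0, μ {a | t < f a} * ENNReal.ofReal (t ^ k) := by
  have h := lintegral_rpow_eq_lintegral_meas_lt_mul μ hf hfm (p := (k + 1 : ℕ)) (by positivity)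
  rw [Nat.cast_add_one k, add_sub_cancel_right, ← Nat.cast_add_one k, ENNReal.ofReal_natCast] at h
  simp only [← Real.rpow_natCast]
  exact_mod_cast h

theorem setLIntegral_Ioi_mul_pow_succ_eq {g : ℝ → ℝ≥0∞} (hg : Measurable g) (k : ℕ) :
    ∫⁻ t in Ioi 0, g t * ENNReal.ofReal (t ^ (k + 1)) =
      (k + 1) * ∫⁻ s in Ioi 0, (∫⁻ t in Ioi s, g t) * ENNReal.ofReal (s ^ k) := by
  set ν := (volume.restrict (Ioi (0 : ℝ))).withDensity g
  have hpos : 0 ≤ᵐ[ν] id :=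
    (ae_withDensity_iff hg).2 <| (ae_restrict_mem measurableSet_Ioi).mono fun t ht _ => le_of_lt ht
  have h := lintegral_ofReal_pow_succ_eq ν hpos aemeasurable_id k
  rw [lintegral_withDensity_eq_lintegral_mul _ hg (by fun_prop)] at h
  refine h.trans (congrArg _ (setLIntegral_congr_fun measurableSet_Ioi fun s (hs : 0 < s) => ?_))
  rw [show {a : ℝ | s < id a} = Ioi s from rfl, withDensity_apply _ measurableSet_Ioi,
    Measure.restrict_restrict measurableSet_Ioi, Ioi_inter_Ioi, sup_of_le_left hs.le]

section NewBetterThanUsed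

variable {g : ℝ → ℝ≥0∞}

theorem IsNewBetterThanUsed.setLIntegral_Ioi_le_mul (hnbu : IsNewBetterThanUsed g)
    (hg : Measurable g) {s : ℝ} (hs : 0 ≤ s) :
    ∫⁻ t in Ioi s, g t ≤ g s * ∫⁻ t in Ioi 0, g t := by
  have hshift := (measurePreserving_add_left volume s).setLIntegral_comp_preimage_emb
    (measurableEmbedding_addLeft s) g (Ioi s)
  rw [show (s + ·) ⁻¹' Ioi s = Ioi 0 by ext; simp] at hshift
  rw [← hshift, ← lintegral_const_mul _ hg]
  exact setLIntegral_mono (hg.const_mul _) fun t (ht : 0 < t) => hnbu s t hs ht.le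

theorem IsNewBetterThanUsed.setLIntegral_Ioi_mul_pow_succ_le (hnbu : IsNewBetterThanUsed g)
    (hg : Measurable g) (k : ℕ) :
    ∫⁻ t in Ioi 0, g t * ENNReal.ofReal (t ^ (k + 1)) ≤
      (k + 1) * ((∫⁻ t in Ioi 0, g t * ENNReal.ofReal (t ^ k)) * ∫⁻ t in Ioi 0, g t) := by
  rw [setLIntegral_Ioi_mul_pow_succ_eq hg, ← lintegral_mul_const _ (by fun_prop)]
  gcongr _ * ?_
  refine setLIntegral_mono' measurableSet_Ioi fun s (hs : 0 < s) => ?_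
  calc (∫⁻ t in Ioi s, g t) * ENNReal.ofReal (s ^ k)
      ≤ (g s * ∫⁻ t in Ioi 0, g t) * ENNReal.ofReal (s ^ k) := by
        gcongr; exact hnbu.setLIntegral_Ioi_le_mul hg (le_of_lt hs)
    _ = g s * ENNReal.ofReal (s ^ k) * ∫⁻ t in Ioi 0, g t := by ring

theorem IsNewBetterThanUsed.setLIntegral_Ioi_ne_top (hnbu : IsNewBetterThanUsed g)
    (hg : Antitone g) (hg0 : g 0 ≤ 1) {t₀ : ℝ} (ht₀ : 0 < t₀) (hgt₀ : g t₀ < 1) :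
    ∫⁻ t in Ioi 0, g t ≠ ∞ := by
  have hpow : ∀ n : ℕ, g (n * t₀) ≤ g t₀ ^ n := by
    intro n
    induction n with
    | zero => simpa using hg0
    | succ n ih =>
      calc g ((n + 1 : ℕ) * t₀) ≤ g (n * t₀) * g t₀ := by
            push_cast; rw [add_one_mul]; exact hnbu _ _ (by positivity) ht₀.le
        _ ≤ g t₀ ^ n * g t₀ := by gcongr
        _ = g t₀ ^ (n + 1) := (pow_succ _ _).symm
  have hcover : Ioi (0 : ℝ) ⊆ ⋃ n : ℕ, Icc (n * t₀) ((n + 1) * t₀) := by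
    intro t ht
    refine mem_iUnion.2 ⟨⌊t / t₀⌋₊, ?_, ?_⟩
    · exact (le_div_iff₀ ht₀).1 (Nat.floor_le (div_nonneg (le_of_lt ht) ht₀.le))
    · exact (div_le_iff₀ ht₀).1 (Nat.lt_floor_add_one _).le
  have hpiece : ∀ n : ℕ,
      ∫⁻ t in Icc (n * t₀ : ℝ) ((n + 1) * t₀), g t ≤ g t₀ ^ n * ENNReal.ofReal t₀ := by
    intro n
    calc ∫⁻ t in Icc (n * t₀ : ℝ) ((n + 1) * t₀), g t
        ≤ ∫⁻ t in Icc (n * t₀ : ℝ) ((n + 1) * t₀), g (n * t₀) :=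
          setLIntegral_mono measurable_const fun t ht => hg ht.1
      _ ≤ g t₀ ^ n * ENNReal.ofReal t₀ := by
          rw [setLIntegral_const, Real.volume_Icc, show (n + 1) * t₀ - n * t₀ = t₀ by ring]
          gcongr
          exact hpow n
  refine ne_top_of_le_ne_top ?_ ((lintegral_mono_set hcover).trans
    ((lintegral_iUnion_le _ _).trans (ENNReal.tsum_le_tsum hpiece)))
  rw [ENNReal.tsum_mul_right, ENNReal.tsum_geometric]
  exact mul_ne_top (inv_ne_top.2 (tsub_pos_of_lt hgt₀).ne') ofReal_ne_top

end NewBetterThanUsed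

section RandomVariable

variable {Ω : Type*} [MeasurableSpace Ω] {P : Measure Ω} {X : Ω → ℝ}

theorem antitone_measure_lt (P : Measure Ω) (X : Ω → ℝ) : Antitone fun t => P {ω | t < X ω} :=
  fun _ _ hst => measure_mono fun _ hω => hst.trans_lt hω

theorem exists_pos_measure_lt_lt_one [IsProbabilityMeasure P] (hXm : Measurable X) :
    ∃ t₀ > 0, P {ω | t₀ < X ω} < 1 := by
  have hlim : Tendsto (fun t : ℝ => P {ω | t < X ω}) atTop (𝓝 0) := by
    have h := tendsto_measure_iInter_atTop (μ := P) (s := fun t : ℝ => {ω | t < X ω})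
      (fun t => (measurableSet_lt measurable_const hXm).nullMeasurableSet)
      (fun s t hst ω (hω : t < X ω) => hst.trans_lt hω) ⟨0, measure_ne_top _ _⟩
    rwa [show (⋂ t : ℝ, {ω | t < X ω}) = ∅ from iInter_eq_empty_iff.2 fun ω =>
      ⟨X ω, lt_irrefl (X ω)⟩, measure_empty] at h
  exact ((eventually_gt_atTop 0).and (hlim.eventually (gt_mem_nhds zero_lt_one))).exists

theorem lintegral_ofReal_eq_setLIntegral_measure_lt (hXm : Measurable X) (hX : ∀ ω, 0 ≤ X ω) :
    ∫⁻ ω, ENNReal.ofReal (X ω) ∂P = ∫⁻ t in Ioi 0, P {ω | t < X ω} := by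
  simpa using lintegral_ofReal_pow_succ_eq P (.of_forall hX) hXm.aemeasurable 0

theorem lintegral_ofReal_ne_top_of_nbu [IsProbabilityMeasure P] (hXm : Measurable X)
    (hX : ∀ ω, 0 ≤ X ω) (hnbu : IsNewBetterThanUsed fun t => P {ω | t < X ω}) :
    ∫⁻ ω, ENNReal.ofReal (X ω) ∂P ≠ ∞ := by
  obtain ⟨t₀, ht₀, hlt⟩ := exists_pos_measure_lt_lt_one (P := P) hXm
  rw [lintegral_ofReal_eq_setLIntegral_measure_lt hXm hX]
  exact hnbu.setLIntegral_Ioi_ne_top (antitone_measure_lt P X) prob_le_one ht₀ hlt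

theorem lintegral_ofReal_pow_le_of_nbu (hXm : Measurable X) (hX : ∀ ω, 0 ≤ X ω)
    (hnbu : IsNewBetterThanUsed fun t => P {ω | t < X ω}) (k : ℕ) :
    ∫⁻ ω, ENNReal.ofReal (X ω ^ (k + 2)) ∂P ≤
      ((k + 2 : ℕ) : ℝ≥0∞) * (∫⁻ ω, ENNReal.ofReal (X ω) ∂P) *
        ∫⁻ ω, ENNReal.ofReal (X ω ^ (k + 1)) ∂P := by
  have hlayer := lintegral_ofReal_pow_succ_eq P (.of_forall hX) hXm.aemeasurable
  rw [hlayer (k + 1), hlayer k, lintegral_ofReal_eq_setLIntegral_measure_lt hXm hX]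
  calc ((k + 1 : ℕ) + 1 : ℝ≥0∞) * ∫⁻ t in Ioi 0, P {ω | t < X ω} * ENNReal.ofReal (t ^ (k + 1))
      ≤ ((k + 1 : ℕ) + 1 : ℝ≥0∞) * ((k + 1) * ((∫⁻ t in Ioi 0, P {ω | t < X ω} *
          ENNReal.ofReal (t ^ k)) * ∫⁻ t in Ioi 0, P {ω | t < X ω})) := by
        gcongr _ * ?_
        exact hnbu.setLIntegral_Ioi_mul_pow_succ_le (antitone_measure_lt P X).measurable k
    _ = _ := by push_cast; ring

theorem momentBounded_of_nbu [IsProbabilityMeasure P] (hXm : Measurable X) (hX : ∀ ω, 0 ≤ X ω)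
    (hnbu : IsNewBetterThanUsed fun t => P {ω | t < X ω}) :
    MomentBounded P X (∫ ω, X ω ∂P) := by
  set M : ℕ → ℝ≥0∞ := fun i => ∫⁻ ω, ENNReal.ofReal (X ω ^ i) ∂P
  have hrec : ∀ k, M (k + 2) ≤ ((k + 2 : ℕ) : ℝ≥0∞) * M 1 * M (k + 1) := fun k => by
    simpa only [M, pow_one] using lintegral_ofReal_pow_le_of_nbu hXm hX hnbu k
  have hM1 : M 1 ≠ ∞ := by simpa [M] using lintegral_ofReal_ne_top_of_nbu hXm hX hnbu
  have hM_succ : ∀ k, M (k + 1) ≠ ∞ := by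
    intro k
    induction k with
    | zero => exact hM1
    | succ k ih =>
      exact ne_top_of_le_ne_top (mul_ne_top (mul_ne_top (natCast_ne_top _) hM1) ih) (hrec k)
  have hM : ∀ i, M i ≠ ∞ := by
    rintro (_ | k)
    · simp [M]
    · exact hM_succ k
  have habs : ∀ i, (fun ω => |X ω| ^ i) = fun ω => X ω ^ i := fun i => by
    simp_rw [abs_of_nonneg (hX _)]
  have hint : ∀ i, ∫ ω, X ω ^ i ∂P = (M i).toReal := fun i =>
    integral_eq_lintegral_of_nonneg_ae (.of_forall fun ω => pow_nonneg (hX ω) i)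
      (hXm.pow_const i).aestronglyMeasurable
  refine ⟨fun i => ?_, ?_⟩
  · rw [habs]
    exact ⟨(hXm.pow_const i).aestronglyMeasurable, (hasFiniteIntegral_iff_ofReal
      (.of_forall fun ω => pow_nonneg (hX ω) i)).2 (hM i).lt_top⟩
  rintro (_ | _ | k) hi
  · omega
  · simp [abs_of_nonneg (hX _)]
  · rw [habs, habs, show ∫ ω, X ω ∂P = ∫ ω, X ω ^ 1 ∂P by simp, hint, hint, hint]
    calc (M (k + 2)).toReal ≤ (((k + 2 : ℕ) : ℝ≥0∞) * M 1 * M (k + 1)).toReal :=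
          ENNReal.toReal_mono (mul_ne_top (mul_ne_top (natCast_ne_top _) hM1) (hM _)) (hrec k)
      _ = _ := by rw [ENNReal.toReal_mul, ENNReal.toReal_mul, ENNReal.toReal_natCast]; rfl

end RandomVariable

/-- For positive `f`: `x ↦ f (x + s) / f x` is antitone for every `s ≥ 0`. -/
def HasAntitoneShiftRatios (f : ℝ → ℝ) : Prop :=
  ∀ x y s : ℝ, y ≤ x → 0 ≤ s → f (x + s) * f y ≤ f x * f (y + s)

theorem hasAntitoneShiftRatios_of_logConcave {f : ℝ → ℝ} (hf : ∀ x, 0 ≤ f x)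
    (hlc : ∀ x y l : ℝ, 0 ≤ l → l ≤ 1 → f x ^ l * f y ^ (1 - l) ≤ f (l * x + (1 - l) * y)) :
    HasAntitoneShiftRatios f := by
  intro x y s hyx hs
  rcases hs.eq_or_lt with rfl | hs
  · simp
  -- `x` and `y + s` are the convex combinations of `x + s` and `y` with weights `l` and `1 - l`
  set l := (x - y) / (x + s - y)
  have hl : l * (x + s - y) = x - y := div_mul_cancel₀ _ (by linarith)
  have hl0 : 0 ≤ l := div_nonneg (by linarith) (by linarith)
  have hl1 : l ≤ 1 := (div_le_one (by linarith)).2 (by linarith)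
  have hx : f (x + s) ^ l * f y ^ (1 - l) ≤ f x := by
    simpa [show l * (x + s) + (1 - l) * y = x by linear_combination hl] using
      hlc (x + s) y l hl0 hl1
  have hys : f (x + s) ^ (1 - l) * f y ^ l ≤ f (y + s) := by
    simpa [show (1 - l) * (x + s) + l * y = y + s by linear_combination -hl] using
      hlc (x + s) y (1 - l) (by linarith) (by linarith)
  calc f (x + s) * f y
      = (f (x + s) ^ l * f y ^ (1 - l)) * (f (x + s) ^ (1 - l) * f y ^ l) := by
        rw [mul_mul_mul_comm, ← Real.rpow_add' (hf _) (by norm_num), mul_comm (f y ^ _),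
          ← Real.rpow_add' (hf _) (by norm_num)]
        simp
    _ ≤ f x * f (y + s) :=
        mul_le_mul hx hys (by have := hf (x + s); have := hf y; positivity) (hf x)

theorem HasAntitoneShiftRatios.setIntegral_Ici {f : ℝ → ℝ} (hshift : HasAntitoneShiftRatios f)
    (hfi : Integrable f) : HasAntitoneShiftRatios fun a => ∫ t in Ici a, f t := by
  intro x y s hyx hs
  dsimp only
  -- split off `[y, x)` and `[y + s, x + s)`; the cross terms compare by pairing `t ≥ x + s` with
  -- `u ∈ [y, x)`, for which `f t * f u ≤ f (t - s) * f (u + s)`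
  have hsplit : ∀ a b : ℝ, a ≤ b →
      ∫ t in Ici a, f t = (∫ t in Ico a b, f t) + ∫ t in Ici b, f t :=
    fun a b hab => by
      rw [← Ico_union_Ici_eq_Ici hab, setIntegral_union
        ((Iio_disjoint_Ici le_rfl).mono_left Ico_subset_Iio_self) measurableSet_Ici
        hfi.integrableOn hfi.integrableOn]
  have htranslate : ∀ (h : ℝ → ℝ) (S : Set ℝ),
      ∫ t in (· + s) ⁻¹' S, h (t + s) = ∫ t in S, h t :=
    (measurePreserving_add_right volume s).setIntegral_preimage_emb
      (measurableEmbedding_addRight s)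
  have hIco : ∫ u in Ico y x, f (u + s) = ∫ u in Ico (y + s) (x + s), f u := by
    simpa using htranslate f (Ico (y + s) (x + s))
  have hIci : ∫ t in Ici (x + s), f (t - s) = ∫ t in Ici x, f t := by
    simpa using (htranslate (fun t => f (t - s)) (Ici (x + s))).symm
  have hpoint : ∀ t ∈ Ici (x + s),
      f t * ∫ u in Ico y x, f u ≤ f (t - s) * ∫ u in Ico y x, f (u + s) := by
    intro t ht
    rw [← integral_const_mul, ← integral_const_mul]
    refine setIntegral_mono_on (hfi.const_mul _).integrableOn
      ((hfi.comp_add_right s).const_mul _).integrableOn measurableSet_Ico fun u hu => ?_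
    simpa using hshift (t - s) u s (by linarith [hu.2, mem_Ici.1 ht]) hs
  have hcross : (∫ t in Ici (x + s), f t) * ∫ u in Ico y x, f u ≤
      (∫ t in Ici x, f t) * ∫ u in Ico (y + s) (x + s), f u := by
    rw [← hIco, ← hIci, ← integral_mul_const, ← integral_mul_const]
    exact setIntegral_mono_on (hfi.mul_const _).integrableOn
      ((hfi.comp_sub_right s).mul_const _).integrableOn measurableSet_Ici hpoint
  rw [hsplit y x hyx, hsplit (y + s) (x + s) (by linarith), mul_add, mul_add]
  linarith [mul_comm (∫ t in Ici (x + s), f t) (∫ t in Ici x, f t)]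

theorem logConcave_density_momentBounded_general
    (Ω : Type) [MeasurableSpace Ω] (P : Measure Ω) [IsProbabilityMeasure P]
    (X : Ω → ℝ) (f : ℝ → ℝ)
    (hXmeas : Measurable X) (hXnonneg : ∀ ω, 0 ≤ X ω)
    (hf_nonneg : ∀ x, 0 ≤ f x)
    (hdens : ∀ s : Set ℝ, MeasurableSet s → P (X ⁻¹' s) = ENNReal.ofReal (∫ x in s, f x))
    (hlogconcave : ∀ x y l : ℝ, 0 ≤ l → l ≤ 1 →
      f x ^ l * f y ^ (1 - l) ≤ f (l * x + (1 - l) * y)) :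
    MomentBounded P X (∫ ω, X ω ∂P) := by
  have hfi : Integrable f := by
    by_contra h
    simpa [integral_undef h] using (hdens univ MeasurableSet.univ).symm
  have htail : ∀ t, P {ω | t < X ω} = ENNReal.ofReal (∫ x in Ici t, f x) := fun t => by
    rw [← setIntegral_congr_set Ioi_ae_eq_Ici, ← hdens _ measurableSet_Ioi]
    rfl
  have htail_zero : ∫ x in Ici 0, f x = 1 := by
    have h := hdens (Ici 0) measurableSet_Ici
    rw [show X ⁻¹' Ici 0 = univ from eq_univ_of_forall hXnonneg, measure_univ] at h
    exact ENNReal.ofReal_eq_one.1 h.symm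
  refine momentBounded_of_nbu hXmeas hXnonneg fun s t hs ht => ?_
  dsimp only
  rw [htail, htail, htail, ← ENNReal.ofReal_mul (setIntegral_nonneg measurableSet_Ici
    fun x _ => hf_nonneg x)]
  refine ENNReal.ofReal_le_ofReal ?_
  simpa [htail_zero] using
    ((hasAntitoneShiftRatios_of_logConcave hf_nonneg hlogconcave).setIntegral_Ici hfi) s 0 t hs ht

theorem logConcave_density_momentBounded
    (Ω : Type) [MeasurableSpace Ω] (P : Measure Ω) [IsProbabilityMeasure P]
    (X : Ω → ℝ) (f : ℝ → ℝ)
    (hXmeas : Measurable X) (hXnonneg : ∀ ω, 0 ≤ X ω)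
    (hf_nonneg : ∀ x, 0 ≤ f x) (hf_meas : Measurable f)
    (hdens : ∀ s : Set ℝ, MeasurableSet s → P (X ⁻¹' s) = ENNReal.ofReal (∫ x in s, f x))
    (hlogconcave : ∀ x y l : ℝ, 0 ≤ l → l ≤ 1 →
      f x ^ l * f y ^ (1 - l) ≤ f (l * x + (1 - l) * y)) :
    MomentBounded P X (∫ ω, X ω ∂P) :=
  logConcave_density_momentBounded_general Ω P X f hXmeas hXnonneg hf_nonneg hdens hlogconcave
end
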